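/- arXiv:math/0310042 — 2 statements merged into one kernel-verified Lean document; each statement's English description precedes it below -/
import Mathlib

section
/- Let U_0, …, U_d denote any one of the six decompositions [0D], [0*D*], [0*D], [0*0], [D*0], [D*D] of V. Then for 0 ≤ i ≤ d the actions of K* and K*^{−1} on U_i satisfy: for [0D]: (K* − q^{d−2i}I)U_i ⊆ U_{i−1} and (K*^{−1} − q^{2i−d}I)U_i ⊆ U_0 + ⋯ + U_{i−1}; for [0*D*]: (K* − q^{d−2i}I)U_i ⊆ U_{i+1} + ⋯ + U_d and (K*^{−1} − q^{2i−d}I)U_i ⊆ U_{i+1}; for [0*D]: K*U_i ⊆ U_{i−1} + ⋯ + U_d and K*^{−1}U_i ⊆ U_0 + ⋯ + U_{i+1}; for [0*0]: (K* − q^{2i−d}I)U_i ⊆ U_{i+1} + ⋯ + U_d and (K*^{−1} − q^{d−2i}I)U_i ⊆ U_{i+1}; for [D*0]: (K* − q^{2i−d}I)U_i = 0 and (K*^{−1} − q^{d−2i}I)U_i = 0; for [D*D]: (K* − q^{2i−d}I)U_i ⊆ U_{i−1} and (K*^{−1} − q^{d−2i}I)U_i ⊆ U_0 + ⋯ + U_{i−1}.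 -/
noncomputable section

open Submodule

variable {K : Type*} [Field K]

/-- `[n]_q = (q^n − q^{−n})/(q − q^{−1})`. -/
def qInt (q : K) (n : ℤ) : K := (q ^ n - q ^ (-n)) / (q - q⁻¹)

/-- Elements `y₀⁺, y₁⁺, y₀⁻, y₁⁻, k₀, k₀⁻¹, k₁, k₁⁻¹` of a unital associative `K`-algebra
satisfy the alternate relations. -/
structure AlternateRelations (q : K) {A : Type*} [Ring A] [Algebra K A]
    (yp ym k kinv : Fin 2 → A) : Prop where
  k_kinv : ∀ i, k i * kinv i = 1
  kinv_k : ∀ i, kinv i * k i = 1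
  central_yp : ∀ i, k 0 * k 1 * yp i = yp i * (k 0 * k 1)
  central_ym : ∀ i, k 0 * k 1 * ym i = ym i * (k 0 * k 1)
  central_k : ∀ i, k 0 * k 1 * k i = k i * (k 0 * k 1)
  central_kinv : ∀ i, k 0 * k 1 * kinv i = kinv i * (k 0 * k 1)
  rel_yp_k : ∀ i, (q - q⁻¹)⁻¹ • (q • (yp i * k i) - q⁻¹ • (k i * yp i)) = 1
  rel_k_ym : ∀ i, (q - q⁻¹)⁻¹ • (q • (k i * ym i) - q⁻¹ • (ym i * k i)) = 1
  rel_ym_yp : ∀ i, (q - q⁻¹)⁻¹ • (q • (ym i * yp i) - q⁻¹ • (yp i * ym i)) = 1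
  rel_yp_ym : ∀ i j, i ≠ j →
    (q - q⁻¹)⁻¹ • (q • (yp i * ym j) - q⁻¹ • (ym j * yp i)) = kinv 0 * kinv 1
  serre_p : ∀ i j, i ≠ j →
    yp i ^ 3 * yp j - qInt q 3 • (yp i ^ 2 * yp j * yp i)
      + qInt q 3 • (yp i * yp j * yp i ^ 2) - yp j * yp i ^ 3 = 0
  serre_m : ∀ i j, i ≠ j →
    ym i ^ 3 * ym j - qInt q 3 • (ym i ^ 2 * ym j * ym i)
      + qInt q 3 • (ym i * ym j * ym i ^ 2) - ym j * ym i ^ 3 = 0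

/-- Elements `e₀⁺, e₁⁺, e₀⁻, e₁⁻, K₀, K₀⁻¹, K₁, K₁⁻¹` of a unital associative `K`-algebra
satisfy the Chevalley relations of `U_q(sl₂ hat)`. -/
structure ChevalleyRelations (q : K) {A : Type*} [Ring A] [Algebra K A]
    (ep em Kg Kginv : Fin 2 → A) : Prop where
  K_Kinv : ∀ i, Kg i * Kginv i = 1
  Kinv_K : ∀ i, Kginv i * Kg i = 1
  K_comm : Kg 0 * Kg 1 = Kg 1 * Kg 0
  KepK_same : ∀ i, Kg i * ep i * Kginv i = (q ^ (2 : ℤ)) • ep i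
  KemK_same : ∀ i, Kg i * em i * Kginv i = (q ^ (-2 : ℤ)) • em i
  KepK_diff : ∀ i j, i ≠ j → Kg i * ep j * Kginv i = (q ^ (-2 : ℤ)) • ep j
  KemK_diff : ∀ i j, i ≠ j → Kg i * em j * Kginv i = (q ^ (2 : ℤ)) • em j
  e_comm_same : ∀ i, ep i * em i - em i * ep i = (q - q⁻¹)⁻¹ • (Kg i - Kginv i)
  e_comm_diff : ∀ i j, i ≠ j → ep i * em j = em j * ep i
  serre_p : ∀ i j, i ≠ j →
    ep i ^ 3 * ep j - qInt q 3 • (ep i ^ 2 * ep j * ep i)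
      + qInt q 3 • (ep i * ep j * ep i ^ 2) - ep j * ep i ^ 3 = 0
  serre_m : ∀ i j, i ≠ j →
    em i ^ 3 * em j - qInt q 3 • (em i ^ 2 * em j * em i)
      + qInt q 3 • (em i * em j * em i ^ 2) - em j * em i ^ 3 = 0

variable {V : Type*} [AddCommGroup V] [Module K V]

/-- A decomposition of `V` of length `d`: nonzero subspaces `U 0, …, U d`
(indexed by `ℤ`, with `U i = ⊥` outside `[0, d]`) whose direct sum is `V`. -/
structure IsDecomposition (d : ℕ) (U : ℤ → Submodule K V) : Prop where
  bot_of_lt : ∀ i : ℤ, i < 0 → U i = ⊥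
  bot_of_gt : ∀ i : ℤ, (d : ℤ) < i → U i = ⊥
  ne_bot : ∀ i : ℤ, 0 ≤ i → i ≤ (d : ℤ) → U i ≠ ⊥
  indep : iSupIndep U
  sup_eq_top : ⨆ i, U i = ⊤

/-- `A, A*` is a tridiagonal pair on `V` with standard orderings `Vs 0, …, Vs d` and
`Vs' 0, …, Vs' d` of the eigenspaces of `A` resp. `A*`, with corresponding eigenvalues
`θ i` resp. `θ' i`. -/
structure IsTridiagonalPair (A A' : Module.End K V) (d : ℕ)
    (Vs Vs' : ℤ → Submodule K V) (θ θ' : ℤ → K) : Prop where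
  decompV : IsDecomposition d Vs
  decompV' : IsDecomposition d Vs'
  eig : ∀ i : ℤ, ∀ v ∈ Vs i, A v = θ i • v
  eig' : ∀ i : ℤ, ∀ v ∈ Vs' i, A' v = θ' i • v
  theta_inj : ∀ i j : ℤ, 0 ≤ i → i ≤ (d : ℤ) → 0 ≤ j → j ≤ (d : ℤ) → θ i = θ j → i = j
  theta'_inj : ∀ i j : ℤ, 0 ≤ i → i ≤ (d : ℤ) → 0 ≤ j → j ≤ (d : ℤ) → θ' i = θ' j → i = j
  trid : ∀ i : ℤ, (Vs i).map A' ≤ Vs (i - 1) ⊔ Vs i ⊔ Vs (i + 1)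
  trid' : ∀ i : ℤ, (Vs' i).map A ≤ Vs' (i - 1) ⊔ Vs' i ⊔ Vs' (i + 1)
  irred : ∀ W : Submodule K V, W.map A ≤ W → W.map A' ≤ W → W = ⊥ ∨ W = ⊤

/-- The sum `U m + U (m+1) + ⋯ + U n`. -/
def sumIcc (U : ℤ → Submodule K V) (m n : ℤ) : Submodule K V :=
  ⨆ j ∈ Set.Icc m n, U j

/-- Decomposition `[0D]`: the `i`-th subspace is `V_i`. -/
def dec0D (Vs : ℤ → Submodule K V) : ℤ → Submodule K V := Vs

/-- Decomposition `[0*D*]`: the `i`-th subspace is `V*_i`. -/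
def dec0sDs (Vs' : ℤ → Submodule K V) : ℤ → Submodule K V := Vs'

/-- Decomposition `[0*D]`: the `i`-th subspace is `(V*_0+⋯+V*_i) ∩ (V_i+⋯+V_d)`. -/
def dec0sD (d : ℕ) (Vs Vs' : ℤ → Submodule K V) (i : ℤ) : Submodule K V :=
  sumIcc Vs' 0 i ⊓ sumIcc Vs i (d : ℤ)

/-- Decomposition `[0*0]`: the `i`-th subspace is `(V*_0+⋯+V*_i) ∩ (V_0+⋯+V_{d−i})`. -/
def dec0s0 (d : ℕ) (Vs Vs' : ℤ → Submodule K V) (i : ℤ) : Submodule K V :=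
  sumIcc Vs' 0 i ⊓ sumIcc Vs 0 ((d : ℤ) - i)

/-- Decomposition `[D*0]`: the `i`-th subspace is `(V*_{d−i}+⋯+V*_d) ∩ (V_0+⋯+V_{d−i})`. -/
def decDs0 (d : ℕ) (Vs Vs' : ℤ → Submodule K V) (i : ℤ) : Submodule K V :=
  sumIcc Vs' ((d : ℤ) - i) (d : ℤ) ⊓ sumIcc Vs 0 ((d : ℤ) - i)

/-- Decomposition `[D*D]`: the `i`-th subspace is `(V*_{d−i}+⋯+V*_d) ∩ (V_i+⋯+V_d)`. -/
def decDsD (d : ℕ) (Vs Vs' : ℤ → Submodule K V) (i : ℤ) : Submodule K V :=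
  sumIcc Vs' ((d : ℤ) - i) (d : ℤ) ⊓ sumIcc Vs i (d : ℤ)

section Aux

lemma le_sumIcc (U : ℤ → Submodule K V) {m n j : ℤ} (h1 : m ≤ j) (h2 : j ≤ n) :
    U j ≤ sumIcc U m n :=
  le_biSup _ (Set.mem_Icc.mpr ⟨h1, h2⟩)

lemma sumIcc_le {U : ℤ → Submodule K V} {m n : ℤ} {X : Submodule K V}
    (h : ∀ j, m ≤ j → j ≤ n → U j ≤ X) : sumIcc U m n ≤ X :=
  iSup₂_le fun j hj => h j (Set.mem_Icc.mp hj).1 (Set.mem_Icc.mp hj).2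

lemma sumIcc_mono (U : ℤ → Submodule K V) {m n m' n' : ℤ} (h1 : m' ≤ m) (h2 : n ≤ n') :
    sumIcc U m n ≤ sumIcc U m' n' :=
  sumIcc_le fun _ hj1 hj2 => le_sumIcc U (h1.trans hj1) (hj2.trans h2)

lemma sumIcc_bot {U : ℤ → Submodule K V} {m n : ℤ} (h : n < m) : sumIcc U m n = ⊥ :=
  le_bot_iff.mp (sumIcc_le fun _ h1 h2 => absurd (h1.trans h2) (not_le.mpr h))

lemma sumIcc_self (U : ℤ → Submodule K V) (m : ℤ) : sumIcc U m m = U m :=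
  le_antisymm (sumIcc_le fun j h1 h2 => le_of_eq (by rw [le_antisymm h2 h1]))
    (le_sumIcc U le_rfl le_rfl)

lemma sumIcc_split (U : ℤ → Submodule K V) (m n k : ℤ) :
    sumIcc U m n ≤ sumIcc U m k ⊔ sumIcc U (k + 1) n :=
  sumIcc_le fun j h1 h2 => by
    rcases le_or_gt j k with h | h
    · exact (le_sumIcc U h1 h).trans le_sup_left
    · exact (le_sumIcc U h h2).trans le_sup_right

lemma mem_sumIcc_decomp {U : ℤ → Submodule K V} {m n : ℤ} {x : V} (hx : x ∈ sumIcc U m n) :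
    ∃ c : ℤ →₀ V, (∀ l, c l ∈ U l) ∧ (∀ l, c l ≠ 0 → m ≤ l ∧ l ≤ n) ∧
      ∑ l ∈ c.support, c l = x := by
  classical
  set U' : ℤ → Submodule K V := fun l => if m ≤ l ∧ l ≤ n then U l else ⊥ with hU'
  have h1 : sumIcc U m n ≤ ⨆ l, U' l := sumIcc_le fun j hj1 hj2 => by
    refine le_trans ?_ (le_iSup U' j)
    simp [hU', hj1, hj2]
  obtain ⟨f, hf, hsum⟩ := (Submodule.mem_iSup_iff_exists_finsupp U' x).mp (h1 hx)
  have hzero : ∀ l, ¬(m ≤ l ∧ l ≤ n) → f l = 0 := by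
    intro l h
    have := hf l
    simpa [hU', h] using this
  refine ⟨f, fun l => ?_, fun l hl => ?_, ?_⟩
  · by_cases h : m ≤ l ∧ l ≤ n
    · have := hf l; simpa [hU', h] using this
    · rw [hzero l h]; exact zero_mem _
  · by_contra h
    exact hl (hzero l h)
  · simpa [Finsupp.sum] using hsum

lemma indep_finset_zero {U : ℤ → Submodule K V} (hU : iSupIndep U) (s : Finset ℤ)
    (c : ℤ → V) (hc : ∀ l, c l ∈ U l) (h0 : ∀ l ∉ s, c l = 0)
    (hsum : ∑ l ∈ s, c l = 0) : ∀ l, c l = 0 := by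
  intro l
  by_cases hl : l ∈ s
  · have h1 : c l = -∑ j ∈ s.erase l, c j := by
      have h := Finset.add_sum_erase s c hl
      rw [hsum] at h
      exact eq_neg_of_add_eq_zero_left h
    have h2 : c l ∈ ⨆ j ∈ (↑(s.erase l) : Set ℤ), U j := by
      rw [h1]
      exact neg_mem (Submodule.sum_mem _ fun j hj => le_biSup U (Finset.mem_coe.mpr hj) (hc j))
    have h3 : Disjoint (U l) (⨆ j ∈ (↑(s.erase l) : Set ℤ), U j) :=
      hU.disjoint_biSup (by simp)
    exact Submodule.disjoint_def.mp h3 _ (hc l) h2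
  · exact h0 l hl

lemma sumIcc_inf_sumIcc_le {U : ℤ → Submodule K V} (hU : iSupIndep U) {m n m' n' : ℤ} :
    sumIcc U m n ⊓ sumIcc U m' n' ≤ sumIcc U (max m m') (min n n') := by
  rintro x ⟨h1, h2⟩
  obtain ⟨c, hc, hcr, hcs⟩ := mem_sumIcc_decomp h1
  obtain ⟨e, he, her, hes⟩ := mem_sumIcc_decomp h2
  have hsub : c.support ⊆ c.support ∪ e.support := Finset.subset_union_left
  have hsub' : e.support ⊆ c.support ∪ e.support := Finset.subset_union_right
  have hc0 : ∀ l ∈ c.support ∪ e.support, l ∉ c.support → c l = 0 := fun l _ hl =>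
    Finsupp.notMem_support_iff.mp hl
  have he0 : ∀ l ∈ c.support ∪ e.support, l ∉ e.support → e l = 0 := fun l _ hl =>
    Finsupp.notMem_support_iff.mp hl
  have hsumu : ∑ l ∈ c.support ∪ e.support, (c l - e l) = 0 := by
    rw [Finset.sum_sub_distrib]
    rw [← Finset.sum_subset hsub hc0, ← Finset.sum_subset hsub' he0, hcs, hes, sub_self]
  have key := indep_finset_zero hU (c.support ∪ e.support) (fun l => c l - e l)
    (fun l => sub_mem (hc l) (he l))
    (fun l hl => by
      simp only [Finset.mem_union, not_or, Finsupp.mem_support_iff, not_not] at hl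
      show c l - e l = 0
      rw [hl.1, hl.2, sub_zero])
    hsumu
  have hce : ∀ l, c l = e l := fun l => sub_eq_zero.mp (key l)
  rw [← hcs]
  refine Submodule.sum_mem _ fun l hl => ?_
  have hne : c l ≠ 0 := Finsupp.mem_support_iff.mp hl
  obtain ⟨ha1, ha2⟩ := hcr l hne
  obtain ⟨hb1, hb2⟩ := her l (by rw [← hce l]; exact hne)
  exact le_sumIcc U (max_le ha1 hb1) (le_min ha2 hb2) (hc l)

lemma le_of_top_sup {S1 S2 X W T : Submodule K V} (htop : S1 ⊔ S2 = ⊤) (hS1 : S1 ≤ X)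
    (hS2 : S2 ≤ W) (hT : T ≤ W) (hdisj : X ⊓ W = ⊥) : T ≤ S2 := by
  intro v hv
  have hvtop : v ∈ S1 ⊔ S2 := htop ▸ Submodule.mem_top
  obtain ⟨x, hx, y, hy, hxy⟩ := Submodule.mem_sup.mp hvtop
  have hxv : x = v - y := by rw [← hxy]; abel
  have hmem : x ∈ X ⊓ W := ⟨hS1 hx, hxv ▸ sub_mem (hT hv) (hS2 hy)⟩
  have hx0 : x = 0 := by rw [hdisj] at hmem; simpa using hmem
  rw [← hxy, hx0, zero_add]
  exact hy

lemma end_sub_smul_apply (T : Module.End K V) (c : K) (v : V) :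
    (T - c • 1) v = T v - c • v := by
  simp [LinearMap.sub_apply, LinearMap.smul_apply, Module.End.one_apply]

lemma sumIcc_apply_le {U : ℤ → Submodule K V} {m n : ℤ} {L : Module.End K V}
    {X : Submodule K V} (h : ∀ j, m ≤ j → j ≤ n → ∀ w ∈ U j, L w ∈ X) :
    ∀ v ∈ sumIcc U m n, L v ∈ X := by
  intro v hv
  refine sumIcc_le (X := X.comap L) (fun j h1 h2 => ?_) hv
  intro w hw
  exact Submodule.mem_comap.mpr (h j h1 h2 w hw)

lemma eig_flag_mem {U : ℤ → Submodule K V} {T : Module.End K V} {μ : ℤ → K}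
    (heig : ∀ i : ℤ, ∀ v ∈ U i, T v = μ i • v) (m n : ℤ) :
    ∀ v ∈ sumIcc U m n, T v ∈ sumIcc U m n := by
  refine sumIcc_apply_le fun j h1 h2 w hw => ?_
  rw [heig j w hw]
  exact Submodule.smul_mem _ _ (le_sumIcc U h1 h2 hw)

lemma eig_flag_lo {U : ℤ → Submodule K V} {T : Module.End K V} {μ : ℤ → K}
    (heig : ∀ i : ℤ, ∀ v ∈ U i, T v = μ i • v) (m n : ℤ) :
    ∀ v ∈ sumIcc U m n, T v - μ n • v ∈ sumIcc U m (n - 1) := by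
  intro v hv
  have key : ∀ v ∈ sumIcc U m n, (T - μ n • 1) v ∈ sumIcc U m (n - 1) := by
    refine sumIcc_apply_le fun j h1 h2 w hw => ?_
    rw [end_sub_smul_apply, heig j w hw, ← sub_smul]
    rcases eq_or_lt_of_le h2 with rfl | hlt
    · simp
    · exact Submodule.smul_mem _ _ (le_sumIcc U h1 (by omega) hw)
  have := key v hv
  rwa [end_sub_smul_apply] at this

lemma eig_flag_hi {U : ℤ → Submodule K V} {T : Module.End K V} {μ : ℤ → K}
    (heig : ∀ i : ℤ, ∀ v ∈ U i, T v = μ i • v) (m n : ℤ) :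
    ∀ v ∈ sumIcc U m n, T v - μ m • v ∈ sumIcc U (m + 1) n := by
  intro v hv
  have key : ∀ v ∈ sumIcc U m n, (T - μ m • 1) v ∈ sumIcc U (m + 1) n := by
    refine sumIcc_apply_le fun j h1 h2 w hw => ?_
    rw [end_sub_smul_apply, heig j w hw, ← sub_smul]
    rcases eq_or_lt_of_le h1 with rfl | hlt
    · simp
    · exact Submodule.smul_mem _ _ (le_sumIcc U (by omega) h2 hw)
  have := key v hv
  rwa [end_sub_smul_apply] at this

lemma trid_flag_lo {U : ℤ → Submodule K V} {T : Module.End K V}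
    (htrid : ∀ i : ℤ, (U i).map T ≤ U (i - 1) ⊔ U i ⊔ U (i + 1))
    (hlt : ∀ i : ℤ, i < 0 → U i = ⊥) {m n : ℤ} (hm : m ≤ 0) :
    ∀ v ∈ sumIcc U m n, T v ∈ sumIcc U m (n + 1) := by
  refine sumIcc_apply_le fun j h1 h2 w hw => ?_
  have hmem : T w ∈ U (j - 1) ⊔ U j ⊔ U (j + 1) :=
    htrid j (Submodule.mem_map_of_mem hw)
  have hle : U (j - 1) ⊔ U j ⊔ U (j + 1) ≤ sumIcc U m (n + 1) := by
    refine sup_le (sup_le ?_ ?_) ?_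
    · rcases le_or_gt m (j - 1) with h | h
      · exact le_sumIcc U h (by omega)
      · rw [hlt (j - 1) (by omega)]; exact bot_le
    · exact le_sumIcc U h1 (by omega)
    · exact le_sumIcc U (by omega) (by omega)
  exact hle hmem

lemma trid_flag_hi {U : ℤ → Submodule K V} {T : Module.End K V} {d : ℕ}
    (htrid : ∀ i : ℤ, (U i).map T ≤ U (i - 1) ⊔ U i ⊔ U (i + 1))
    (hgt : ∀ i : ℤ, (d : ℤ) < i → U i = ⊥) {m n : ℤ} (hn : (d : ℤ) ≤ n) :
    ∀ v ∈ sumIcc U m n, T v ∈ sumIcc U (m - 1) n := by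
  refine sumIcc_apply_le fun j h1 h2 w hw => ?_
  have hmem : T w ∈ U (j - 1) ⊔ U j ⊔ U (j + 1) :=
    htrid j (Submodule.mem_map_of_mem hw)
  have hle : U (j - 1) ⊔ U j ⊔ U (j + 1) ≤ sumIcc U (m - 1) n := by
    refine sup_le (sup_le ?_ ?_) ?_
    · exact le_sumIcc U (by omega) (by omega)
    · exact le_sumIcc U (by omega) h2
    · rcases le_or_gt (j + 1) n with h | h
      · exact le_sumIcc U (by omega) h
      · rw [hgt (j + 1) (by omega)]; exact bot_le
  exact hle hmem

lemma IsDecomposition.sumIcc_eq_top {d : ℕ} {U : ℤ → Submodule K V}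
    (hD : IsDecomposition d U) : sumIcc U 0 (d : ℤ) = ⊤ := by
  refine top_unique ?_
  rw [← hD.sup_eq_top]
  refine iSup_le fun j => ?_
  rcases lt_or_ge j 0 with h | h
  · rw [hD.bot_of_lt j h]; exact bot_le
  · rcases le_or_gt j (d : ℤ) with h2 | h2
    · exact le_sumIcc U h h2
    · rw [hD.bot_of_gt j h2]; exact bot_le

lemma span_sumIcc_top {d : ℕ} {D : ℤ → Submodule K V} (hspan : (⨆ i, D i) = ⊤)
    (hlt : ∀ j : ℤ, j < 0 → D j = ⊥) (hgt : ∀ j : ℤ, (d : ℤ) < j → D j = ⊥) :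
    sumIcc D 0 (d : ℤ) = ⊤ := by
  refine top_unique ?_
  rw [← hspan]
  refine iSup_le fun j => ?_
  rcases lt_or_ge j 0 with h | h
  · rw [hlt j h]; exact bot_le
  · rcases le_or_gt j (d : ℤ) with h2 | h2
    · exact le_sumIcc D h h2
    · rw [hgt j h2]; exact bot_le

lemma sup_top_of_span {D : ℤ → Submodule K V} (hspan : (⨆ i, D i) = ⊤)
    {X Y : Submodule K V} {k : ℤ} (hlo : ∀ j : ℤ, j ≤ k → D j ≤ X)
    (hhi : ∀ j : ℤ, k < j → D j ≤ Y) : X ⊔ Y = ⊤ := by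
  refine top_unique ?_
  rw [← hspan]
  refine iSup_le fun j => ?_
  rcases le_or_gt j k with h | h
  · exact (hlo j h).trans le_sup_left
  · exact (hhi j h).trans le_sup_right

lemma mem_sup_of_raise {X Y : Submodule K V} {u v : V} (c : K) (h1 : v ∈ X)
    (h2 : u - c • v ∈ Y) : u ∈ X ⊔ Y := by
  have h : u = c • v + (u - c • v) := by abel
  rw [h]
  exact add_mem (Submodule.mem_sup_left (Submodule.smul_mem _ _ h1))
    (Submodule.mem_sup_right h2)

lemma mem_sup_of_lower {X Y : Submodule K V} {u v : V} (c : K) (h1 : v ∈ Y)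
    (h2 : u - c • v ∈ X) : u ∈ X ⊔ Y := by
  have h : u = (u - c • v) + c • v := by abel
  rw [h]
  exact add_mem (Submodule.mem_sup_left h2)
    (Submodule.mem_sup_right (Submodule.smul_mem _ _ h1))

lemma finrank_add_eq_of_compl [FiniteDimensional K V] {X Y : Submodule K V}
    (hsup : X ⊔ Y = ⊤) (hinf : X ⊓ Y = ⊥) :
    Module.finrank K X + Module.finrank K Y = Module.finrank K V := by
  have h := Submodule.finrank_sup_add_finrank_inf_eq X Y
  rw [hsup, hinf, finrank_top, finrank_bot] at h
  omega

lemma le_finrank_add_of_sup_top [FiniteDimensional K V] {X Y : Submodule K V}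
    (hsup : X ⊔ Y = ⊤) :
    Module.finrank K V ≤ Module.finrank K X + Module.finrank K Y := by
  have h := Submodule.finrank_sup_add_finrank_inf_eq X Y
  rw [hsup, finrank_top] at h
  omega

lemma inf_bot_of_finrank [FiniteDimensional K V] {X Y : Submodule K V}
    (hsup : X ⊔ Y = ⊤)
    (h : Module.finrank K X + Module.finrank K Y ≤ Module.finrank K V) : X ⊓ Y = ⊥ := by
  have h2 := Submodule.finrank_sup_add_finrank_inf_eq X Y
  rw [hsup, finrank_top] at h2
  have h0 : Module.finrank K ↥(X ⊓ Y) = 0 := by omega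
  exact Submodule.finrank_eq_zero.mp h0

lemma span_split_top {d : ℕ} {D : ℤ → Submodule K V} (hspan : (⨆ i, D i) = ⊤)
    (hlt : ∀ j : ℤ, j < 0 → D j = ⊥) (hgt : ∀ j : ℤ, (d : ℤ) < j → D j = ⊥) (k : ℤ) :
    sumIcc D 0 k ⊔ sumIcc D (k + 1) (d : ℤ) = ⊤ := by
  refine sup_top_of_span hspan (k := k) (fun j hj => ?_) (fun j hj => ?_)
  · rcases lt_or_ge j 0 with h | h
    · rw [hlt j h]; exact bot_le
    · exact le_sumIcc D h hj
  · rcases le_or_gt j (d : ℤ) with h | h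
    · exact le_sumIcc D hj h
    · rw [hgt j h]; exact bot_le

lemma q_zpow_zero {q : K} (hq0 : q ≠ 0) (hq : ∀ n : ℕ, 0 < n → q ^ n ≠ 1) :
    ∀ m : ℤ, q ^ m = 1 → m = 0 := by
  have key : ∀ m : ℤ, 0 < m → q ^ m ≠ 1 := by
    intro m hm h
    have h2 : q ^ m.toNat = 1 := by
      rw [← zpow_natCast, Int.toNat_of_nonneg (le_of_lt hm)]
      exact h
    exact hq m.toNat (by omega) h2
  intro m hm
  rcases lt_trichotomy m 0 with h | h | h
  · have h2 : q ^ (-m) = 1 := by rw [zpow_neg, hm, inv_one]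
    exact ((key (-m) (by omega)) h2).elim
  · exact h
  · exact ((key m h) hm).elim

lemma q_zpow_inj {q : K} (hq0 : q ≠ 0) (hq : ∀ n : ℕ, 0 < n → q ^ n ≠ 1)
    {m n : ℤ} (h : q ^ m = q ^ n) : m = n := by
  have h1 : q ^ (m - n) = 1 := by
    rw [zpow_sub₀ hq0, h, div_self (zpow_ne_zero _ hq0)]
  have := q_zpow_zero hq0 hq _ h1
  omega

section TDP

variable {A A' : Module.End K V} {d : ℕ} {Vs Vs' : ℤ → Submodule K V} {θ θ' : ℤ → K}

lemma W_bot_lt (i : ℤ) (hi : i < 0) : decDs0 d Vs Vs' i = ⊥ := by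
  rw [decDs0, sumIcc_bot (by omega : (d : ℤ) < (d : ℤ) - i), bot_inf_eq]

lemma W_bot_gt (i : ℤ) (hi : (d : ℤ) < i) : decDs0 d Vs Vs' i = ⊥ := by
  rw [decDs0, sumIcc_bot (by omega : (d : ℤ) - i < 0), inf_bot_eq]

lemma P_bot_lt (i : ℤ) (hi : i < 0) : dec0sD d Vs Vs' i = ⊥ := by
  rw [dec0sD, sumIcc_bot (by omega : i < 0), bot_inf_eq]

lemma P_bot_gt (i : ℤ) (hi : (d : ℤ) < i) : dec0sD d Vs Vs' i = ⊥ := by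
  rw [dec0sD, sumIcc_bot (by omega : (d : ℤ) < i), inf_bot_eq]

lemma Q_bot_lt (i : ℤ) (hi : i < 0) : dec0s0 d Vs Vs' i = ⊥ := by
  rw [dec0s0, sumIcc_bot (by omega : i < 0), bot_inf_eq]

lemma Q_bot_gt (i : ℤ) (hi : (d : ℤ) < i) : dec0s0 d Vs Vs' i = ⊥ := by
  rw [dec0s0, sumIcc_bot (by omega : (d : ℤ) - i < 0), inf_bot_eq]

lemma X_bot_lt (i : ℤ) (hi : i < 0) : decDsD d Vs Vs' i = ⊥ := by
  rw [decDsD, sumIcc_bot (by omega : (d : ℤ) < (d : ℤ) - i), bot_inf_eq]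

lemma X_bot_gt (i : ℤ) (hi : (d : ℤ) < i) : decDsD d Vs Vs' i = ⊥ := by
  rw [decDsD, sumIcc_bot (by omega : (d : ℤ) < i), inf_bot_eq]

variable (hTD : IsTridiagonalPair A A' d Vs Vs' θ θ')
include hTD

lemma W_raise : ∀ l : ℤ, ∀ w ∈ decDs0 d Vs Vs' l,
    A w - θ ((d : ℤ) - l) • w ∈ decDs0 d Vs Vs' (l + 1) := by
  intro l w hw
  rw [decDs0, Submodule.mem_inf] at hw
  obtain ⟨h1, h2⟩ := hw
  rw [decDs0, Submodule.mem_inf, show (d : ℤ) - (l + 1) = (d : ℤ) - l - 1 by ring]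
  constructor
  · have hA : A w ∈ sumIcc Vs' ((d : ℤ) - l - 1) (d : ℤ) :=
      trid_flag_hi hTD.trid' hTD.decompV'.bot_of_gt le_rfl w h1
    have hsm : θ ((d : ℤ) - l) • w ∈ sumIcc Vs' ((d : ℤ) - l - 1) (d : ℤ) :=
      Submodule.smul_mem _ _ (sumIcc_mono Vs' (by omega) le_rfl h1)
    exact sub_mem hA hsm
  · exact eig_flag_lo hTD.eig 0 ((d : ℤ) - l) w h2

lemma W_lower : ∀ l : ℤ, ∀ w ∈ decDs0 d Vs Vs' l,
    A' w - θ' ((d : ℤ) - l) • w ∈ decDs0 d Vs Vs' (l - 1) := by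
  intro l w hw
  rw [decDs0, Submodule.mem_inf] at hw
  obtain ⟨h1, h2⟩ := hw
  rw [decDs0, Submodule.mem_inf, show (d : ℤ) - (l - 1) = (d : ℤ) - l + 1 by ring]
  constructor
  · exact eig_flag_hi hTD.eig' ((d : ℤ) - l) (d : ℤ) w h1
  · have hA : A' w ∈ sumIcc Vs 0 ((d : ℤ) - l + 1) :=
      trid_flag_lo hTD.trid hTD.decompV.bot_of_lt le_rfl w h2
    have hsm : θ' ((d : ℤ) - l) • w ∈ sumIcc Vs 0 ((d : ℤ) - l + 1) :=
      Submodule.smul_mem _ _ (sumIcc_mono Vs le_rfl (by omega) h2)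
    exact sub_mem hA hsm

lemma P_raise : ∀ i : ℤ, ∀ v ∈ dec0sD d Vs Vs' i,
    A v - θ i • v ∈ dec0sD d Vs Vs' (i + 1) := by
  intro i v hv
  rw [dec0sD, Submodule.mem_inf] at hv
  obtain ⟨h1, h2⟩ := hv
  rw [dec0sD, Submodule.mem_inf]
  constructor
  · have hA : A v ∈ sumIcc Vs' 0 (i + 1) :=
      trid_flag_lo hTD.trid' hTD.decompV'.bot_of_lt le_rfl v h1
    have hsm : θ i • v ∈ sumIcc Vs' 0 (i + 1) :=
      Submodule.smul_mem _ _ (sumIcc_mono Vs' le_rfl (by omega) h1)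
    exact sub_mem hA hsm
  · exact eig_flag_hi hTD.eig i (d : ℤ) v h2

lemma P_lower : ∀ i : ℤ, ∀ v ∈ dec0sD d Vs Vs' i,
    A' v - θ' i • v ∈ dec0sD d Vs Vs' (i - 1) := by
  intro i v hv
  rw [dec0sD, Submodule.mem_inf] at hv
  obtain ⟨h1, h2⟩ := hv
  rw [dec0sD, Submodule.mem_inf]
  constructor
  · exact eig_flag_lo hTD.eig' 0 i v h1
  · have hA : A' v ∈ sumIcc Vs (i - 1) (d : ℤ) :=
      trid_flag_hi hTD.trid hTD.decompV.bot_of_gt le_rfl v h2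
    have hsm : θ' i • v ∈ sumIcc Vs (i - 1) (d : ℤ) :=
      Submodule.smul_mem _ _ (sumIcc_mono Vs (by omega) le_rfl h2)
    exact sub_mem hA hsm

lemma Q_raise : ∀ i : ℤ, ∀ v ∈ dec0s0 d Vs Vs' i,
    A v - θ ((d : ℤ) - i) • v ∈ dec0s0 d Vs Vs' (i + 1) := by
  intro i v hv
  rw [dec0s0, Submodule.mem_inf] at hv
  obtain ⟨h1, h2⟩ := hv
  rw [dec0s0, Submodule.mem_inf, show (d : ℤ) - (i + 1) = (d : ℤ) - i - 1 by ring]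
  constructor
  · have hA : A v ∈ sumIcc Vs' 0 (i + 1) :=
      trid_flag_lo hTD.trid' hTD.decompV'.bot_of_lt le_rfl v h1
    have hsm : θ ((d : ℤ) - i) • v ∈ sumIcc Vs' 0 (i + 1) :=
      Submodule.smul_mem _ _ (sumIcc_mono Vs' le_rfl (by omega) h1)
    exact sub_mem hA hsm
  · exact eig_flag_lo hTD.eig 0 ((d : ℤ) - i) v h2

lemma Q_lower : ∀ i : ℤ, ∀ v ∈ dec0s0 d Vs Vs' i,
    A' v - θ' i • v ∈ dec0s0 d Vs Vs' (i - 1) := by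
  intro i v hv
  rw [dec0s0, Submodule.mem_inf] at hv
  obtain ⟨h1, h2⟩ := hv
  rw [dec0s0, Submodule.mem_inf, show (d : ℤ) - (i - 1) = (d : ℤ) - i + 1 by ring]
  constructor
  · exact eig_flag_lo hTD.eig' 0 i v h1
  · have hA : A' v ∈ sumIcc Vs 0 ((d : ℤ) - i + 1) :=
      trid_flag_lo hTD.trid hTD.decompV.bot_of_lt le_rfl v h2
    have hsm : θ' i • v ∈ sumIcc Vs 0 ((d : ℤ) - i + 1) :=
      Submodule.smul_mem _ _ (sumIcc_mono Vs le_rfl (by omega) h2)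
    exact sub_mem hA hsm

lemma X_raise : ∀ i : ℤ, ∀ v ∈ decDsD d Vs Vs' i,
    A v - θ i • v ∈ decDsD d Vs Vs' (i + 1) := by
  intro i v hv
  rw [decDsD, Submodule.mem_inf] at hv
  obtain ⟨h1, h2⟩ := hv
  rw [decDsD, Submodule.mem_inf, show (d : ℤ) - (i + 1) = (d : ℤ) - i - 1 by ring]
  constructor
  · have hA : A v ∈ sumIcc Vs' ((d : ℤ) - i - 1) (d : ℤ) :=
      trid_flag_hi hTD.trid' hTD.decompV'.bot_of_gt le_rfl v h1
    have hsm : θ i • v ∈ sumIcc Vs' ((d : ℤ) - i - 1) (d : ℤ) :=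
      Submodule.smul_mem _ _ (sumIcc_mono Vs' (by omega) le_rfl h1)
    exact sub_mem hA hsm
  · exact eig_flag_hi hTD.eig i (d : ℤ) v h2

lemma X_lower : ∀ i : ℤ, ∀ v ∈ decDsD d Vs Vs' i,
    A' v - θ' ((d : ℤ) - i) • v ∈ decDsD d Vs Vs' (i - 1) := by
  intro i v hv
  rw [decDsD, Submodule.mem_inf] at hv
  obtain ⟨h1, h2⟩ := hv
  rw [decDsD, Submodule.mem_inf, show (d : ℤ) - (i - 1) = (d : ℤ) - i + 1 by ring]
  constructor
  · exact eig_flag_hi hTD.eig' ((d : ℤ) - i) (d : ℤ) v h1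
  · have hA : A' v ∈ sumIcc Vs (i - 1) (d : ℤ) :=
      trid_flag_hi hTD.trid hTD.decompV.bot_of_gt le_rfl v h2
    have hsm : θ' ((d : ℤ) - i) • v ∈ sumIcc Vs (i - 1) (d : ℤ) :=
      Submodule.smul_mem _ _ (sumIcc_mono Vs (by omega) le_rfl h2)
    exact sub_mem hA hsm

lemma span_top_of_steps (D : ℤ → Submodule K V)
    (hA : ∀ i : ℤ, ∀ v ∈ D i, A v ∈ D i ⊔ D (i + 1))
    (hA' : ∀ i : ℤ, ∀ v ∈ D i, A' v ∈ D (i - 1) ⊔ D i)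
    (i₀ : ℤ) (hne : D i₀ ≠ ⊥) : (⨆ i, D i) = ⊤ := by
  have hmapA : (⨆ i, D i).map A ≤ ⨆ i, D i := by
    rw [Submodule.map_iSup]
    refine iSup_le fun i => ?_
    rintro _ ⟨v, hv, rfl⟩
    exact sup_le (le_iSup D i) (le_iSup D (i + 1)) (hA i v hv)
  have hmapA' : (⨆ i, D i).map A' ≤ ⨆ i, D i := by
    rw [Submodule.map_iSup]
    refine iSup_le fun i => ?_
    rintro _ ⟨v, hv, rfl⟩
    exact sup_le (le_iSup D (i - 1)) (le_iSup D i) (hA' i v hv)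
  rcases hTD.irred _ hmapA hmapA' with h | h
  · exact absurd (le_bot_iff.mp (h ▸ le_iSup D i₀)) hne
  · exact h

lemma W_span : (⨆ i, decDs0 d Vs Vs' i) = ⊤ := by
  refine span_top_of_steps hTD _ ?_ ?_ (d : ℤ) ?_
  · intro i v hv
    exact mem_sup_of_raise (θ ((d : ℤ) - i)) hv (W_raise hTD i v hv)
  · intro i v hv
    exact mem_sup_of_lower (θ' ((d : ℤ) - i)) hv (W_lower hTD i v hv)
  · rw [decDs0, show (d : ℤ) - (d : ℤ) = 0 by ring, hTD.decompV'.sumIcc_eq_top,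
      sumIcc_self, top_inf_eq]
    exact hTD.decompV.ne_bot 0 le_rfl (Int.ofNat_nonneg d)

lemma P_span : (⨆ i, dec0sD d Vs Vs' i) = ⊤ := by
  refine span_top_of_steps hTD _ ?_ ?_ 0 ?_
  · intro i v hv
    exact mem_sup_of_raise (θ i) hv (P_raise hTD i v hv)
  · intro i v hv
    exact mem_sup_of_lower (θ' i) hv (P_lower hTD i v hv)
  · rw [dec0sD, sumIcc_self, hTD.decompV.sumIcc_eq_top, inf_top_eq]
    exact hTD.decompV'.ne_bot 0 le_rfl (Int.ofNat_nonneg d)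

lemma Q_span : (⨆ i, dec0s0 d Vs Vs' i) = ⊤ := by
  refine span_top_of_steps hTD _ ?_ ?_ 0 ?_
  · intro i v hv
    exact mem_sup_of_raise (θ ((d : ℤ) - i)) hv (Q_raise hTD i v hv)
  · intro i v hv
    exact mem_sup_of_lower (θ' i) hv (Q_lower hTD i v hv)
  · rw [dec0s0, sumIcc_self, show (d : ℤ) - 0 = (d : ℤ) by ring,
      hTD.decompV.sumIcc_eq_top, inf_top_eq]
    exact hTD.decompV'.ne_bot 0 le_rfl (Int.ofNat_nonneg d)

lemma X_span : (⨆ i, decDsD d Vs Vs' i) = ⊤ := by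
  refine span_top_of_steps hTD _ ?_ ?_ 0 ?_
  · intro i v hv
    exact mem_sup_of_raise (θ i) hv (X_raise hTD i v hv)
  · intro i v hv
    exact mem_sup_of_lower (θ' ((d : ℤ) - i)) hv (X_lower hTD i v hv)
  · rw [decDsD, show (d : ℤ) - 0 = (d : ℤ) by ring, sumIcc_self,
      hTD.decompV.sumIcc_eq_top, inf_top_eq]
    exact hTD.decompV'.ne_bot (d : ℤ) (Int.ofNat_nonneg d) le_rfl

lemma T1 : ∀ i : ℤ, sumIcc Vs' 0 i ⊔ sumIcc Vs (i + 1) (d : ℤ) = ⊤ := by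
  intro i
  refine sup_top_of_span (P_span hTD) (k := i) (fun j hj => ?_) (fun j hj => ?_)
  · exact inf_le_left.trans (sumIcc_mono Vs' le_rfl hj)
  · exact inf_le_right.trans (sumIcc_mono Vs (by omega) le_rfl)

lemma T2 : ∀ i : ℤ, sumIcc Vs' 0 i ⊔ sumIcc Vs 0 ((d : ℤ) - i - 1) = ⊤ := by
  intro i
  refine sup_top_of_span (Q_span hTD) (k := i) (fun j hj => ?_) (fun j hj => ?_)
  · exact inf_le_left.trans (sumIcc_mono Vs' le_rfl hj)
  · exact inf_le_right.trans (sumIcc_mono Vs le_rfl (by omega))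

lemma T3 : ∀ m : ℤ, sumIcc Vs' m (d : ℤ) ⊔ sumIcc Vs 0 (m - 1) = ⊤ := by
  intro m
  refine sup_top_of_span (W_span hTD) (k := (d : ℤ) - m) (fun j hj => ?_) (fun j hj => ?_)
  · exact inf_le_left.trans (sumIcc_mono Vs' (by omega) le_rfl)
  · exact inf_le_right.trans (sumIcc_mono Vs le_rfl (by omega))

lemma T4 : ∀ i : ℤ, sumIcc Vs' ((d : ℤ) - i) (d : ℤ) ⊔ sumIcc Vs (i + 1) (d : ℤ) = ⊤ := by
  intro i
  refine sup_top_of_span (X_span hTD) (k := i) (fun j hj => ?_) (fun j hj => ?_)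
  · exact inf_le_left.trans (sumIcc_mono Vs' (by omega) le_rfl)
  · exact inf_le_right.trans (sumIcc_mono Vs (by omega) le_rfl)

section Finrank

variable [FiniteDimensional K V]

lemma complV_sup : ∀ m : ℤ, sumIcc Vs 0 (m - 1) ⊔ sumIcc Vs m (d : ℤ) = ⊤ := by
  intro m
  refine top_unique ?_
  rw [← hTD.decompV.sumIcc_eq_top]
  have := sumIcc_split Vs 0 (d : ℤ) (m - 1)
  rwa [show m - 1 + 1 = m by ring] at this

lemma complV_inf : ∀ m : ℤ, sumIcc Vs 0 (m - 1) ⊓ sumIcc Vs m (d : ℤ) = ⊥ := by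
  intro m
  refine le_bot_iff.mp ((sumIcc_inf_sumIcc_le hTD.decompV.indep).trans_eq ?_)
  exact sumIcc_bot (by omega)

lemma complV'_sup : ∀ m : ℤ, sumIcc Vs' 0 (m - 1) ⊔ sumIcc Vs' m (d : ℤ) = ⊤ := by
  intro m
  refine top_unique ?_
  rw [← hTD.decompV'.sumIcc_eq_top]
  have := sumIcc_split Vs' 0 (d : ℤ) (m - 1)
  rwa [show m - 1 + 1 = m by ring] at this

lemma complV'_inf : ∀ m : ℤ, sumIcc Vs' 0 (m - 1) ⊓ sumIcc Vs' m (d : ℤ) = ⊥ := by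
  intro m
  refine le_bot_iff.mp ((sumIcc_inf_sumIcc_le hTD.decompV'.indep).trans_eq ?_)
  exact sumIcc_bot (by omega)

lemma complV_rank : ∀ m : ℤ,
    Module.finrank K (sumIcc Vs 0 (m - 1)) + Module.finrank K (sumIcc Vs m (d : ℤ)) =
      Module.finrank K V := fun m =>
  finrank_add_eq_of_compl (complV_sup hTD m) (complV_inf hTD m)

lemma complV'_rank : ∀ m : ℤ,
    Module.finrank K (sumIcc Vs' 0 (m - 1)) + Module.finrank K (sumIcc Vs' m (d : ℤ)) =
      Module.finrank K V := fun m =>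
  finrank_add_eq_of_compl (complV'_sup hTD m) (complV'_inf hTD m)

lemma fstar_eq : ∀ i : ℤ,
    Module.finrank K (sumIcc Vs' 0 i) = Module.finrank K (sumIcc Vs 0 i) := by
  intro i
  have h1 := le_finrank_add_of_sup_top (T1 hTD i)
  have h2 := le_finrank_add_of_sup_top (T3 hTD (i + 1))
  have e1 := complV_rank hTD (i + 1)
  have e2 := complV'_rank hTD (i + 1)
  rw [show i + 1 - 1 = i by ring] at e1 e2 h2
  omega

lemma Z1 : ∀ i : ℤ, sumIcc Vs' 0 i ⊓ sumIcc Vs (i + 1) (d : ℤ) = ⊥ := by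
  intro i
  refine inf_bot_of_finrank (T1 hTD i) ?_
  have e1 := complV_rank hTD (i + 1)
  rw [show i + 1 - 1 = i by ring] at e1
  rw [fstar_eq hTD i]
  omega

lemma Z3 : ∀ m : ℤ, sumIcc Vs' m (d : ℤ) ⊓ sumIcc Vs 0 (m - 1) = ⊥ := by
  intro m
  refine inf_bot_of_finrank (T3 hTD m) ?_
  have e1 := complV'_rank hTD m
  rw [fstar_eq hTD (m - 1)] at e1
  omega

lemma sym_rank : ∀ i : ℤ,
    Module.finrank K (sumIcc Vs 0 i) + Module.finrank K (sumIcc Vs 0 ((d : ℤ) - i - 1)) =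
      Module.finrank K V := by
  intro i
  have hge : Module.finrank K V ≤
      Module.finrank K (sumIcc Vs 0 i) + Module.finrank K (sumIcc Vs 0 ((d : ℤ) - i - 1)) := by
    have h2 := le_finrank_add_of_sup_top (T2 hTD i)
    rw [fstar_eq hTD i] at h2
    exact h2
  have hle : Module.finrank K (sumIcc Vs 0 i) +
      Module.finrank K (sumIcc Vs 0 ((d : ℤ) - i - 1)) ≤ Module.finrank K V := by
    have h4 := le_finrank_add_of_sup_top (T4 hTD ((d : ℤ) - 1 - i))
    rw [show (d : ℤ) - ((d : ℤ) - 1 - i) = i + 1 by ring,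
      show (d : ℤ) - 1 - i + 1 = (d : ℤ) - i by ring] at h4
    have e1 := complV_rank hTD ((d : ℤ) - i)
    rw [show (d : ℤ) - i - 1 = (d : ℤ) - i - 1 by ring] at e1
    have e2 := complV'_rank hTD (i + 1)
    rw [show i + 1 - 1 = i by ring] at e2
    have e3 := fstar_eq hTD i
    omega
  omega

lemma Z2 : ∀ i : ℤ, sumIcc Vs' 0 i ⊓ sumIcc Vs 0 ((d : ℤ) - i - 1) = ⊥ := by
  intro i
  refine inf_bot_of_finrank (T2 hTD i) ?_
  rw [fstar_eq hTD i]
  exact le_of_eq (sym_rank hTD i)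

lemma Z4 : ∀ i : ℤ, sumIcc Vs' ((d : ℤ) - i) (d : ℤ) ⊓ sumIcc Vs (i + 1) (d : ℤ) = ⊥ := by
  intro i
  refine inf_bot_of_finrank (T4 hTD i) ?_
  have e1 := complV_rank hTD (i + 1)
  rw [show i + 1 - 1 = i by ring] at e1
  have e2 := complV'_rank hTD ((d : ℤ) - i)
  rw [fstar_eq hTD ((d : ℤ) - i - 1)] at e2
  have e3 := sym_rank hTD i
  omega

lemma FlagW_F (i : ℤ) :
    sumIcc Vs 0 ((d : ℤ) - i) ≤ sumIcc (decDs0 d Vs Vs') i (d : ℤ) := by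
  have htop := span_split_top (W_span hTD) W_bot_lt W_bot_gt (i - 1)
  rw [show i - 1 + 1 = i by ring] at htop
  refine le_of_top_sup (X := sumIcc Vs' ((d : ℤ) - i + 1) (d : ℤ))
    (W := sumIcc Vs 0 ((d : ℤ) - i)) htop ?_ ?_ le_rfl ?_
  · refine sumIcc_le fun j h1 h2 => ?_
    rw [decDs0]
    exact inf_le_left.trans (sumIcc_mono Vs' (by omega) le_rfl)
  · refine sumIcc_le fun j h1 h2 => ?_
    rw [decDs0]
    exact inf_le_right.trans (sumIcc_mono Vs le_rfl (by omega))
  · have := Z3 hTD ((d : ℤ) - i + 1)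
    rwa [show (d : ℤ) - i + 1 - 1 = (d : ℤ) - i by ring] at this

lemma FlagW_Gs (i : ℤ) :
    sumIcc Vs' ((d : ℤ) - i) (d : ℤ) ≤ sumIcc (decDs0 d Vs Vs') 0 i := by
  have htop := span_split_top (W_span hTD) W_bot_lt W_bot_gt i
  rw [sup_comm] at htop
  refine le_of_top_sup (X := sumIcc Vs 0 ((d : ℤ) - i - 1))
    (W := sumIcc Vs' ((d : ℤ) - i) (d : ℤ)) htop ?_ ?_ le_rfl ?_
  · refine sumIcc_le fun j h1 h2 => ?_
    rw [decDs0]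
    exact inf_le_right.trans (sumIcc_mono Vs le_rfl (by omega))
  · refine sumIcc_le fun j h1 h2 => ?_
    rw [decDs0]
    exact inf_le_left.trans (sumIcc_mono Vs' (by omega) le_rfl)
  · rw [inf_comm]
    exact Z3 hTD ((d : ℤ) - i)

lemma FlagP_G (m : ℤ) :
    sumIcc Vs m (d : ℤ) ≤ sumIcc (dec0sD d Vs Vs') m (d : ℤ) := by
  have htop := span_split_top (P_span hTD) P_bot_lt P_bot_gt (m - 1)
  rw [show m - 1 + 1 = m by ring] at htop
  refine le_of_top_sup (X := sumIcc Vs' 0 (m - 1))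
    (W := sumIcc Vs m (d : ℤ)) htop ?_ ?_ le_rfl ?_
  · refine sumIcc_le fun j h1 h2 => ?_
    rw [dec0sD]
    exact inf_le_left.trans (sumIcc_mono Vs' le_rfl (by omega))
  · refine sumIcc_le fun j h1 h2 => ?_
    rw [dec0sD]
    exact inf_le_right.trans (sumIcc_mono Vs (by omega) le_rfl)
  · have := Z1 hTD (m - 1)
    rwa [show m - 1 + 1 = m by ring] at this

lemma FlagP_Fs (m : ℤ) :
    sumIcc Vs' 0 m ≤ sumIcc (dec0sD d Vs Vs') 0 m := by
  have htop := span_split_top (P_span hTD) P_bot_lt P_bot_gt m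
  rw [sup_comm] at htop
  refine le_of_top_sup (X := sumIcc Vs (m + 1) (d : ℤ))
    (W := sumIcc Vs' 0 m) htop ?_ ?_ le_rfl ?_
  · refine sumIcc_le fun j h1 h2 => ?_
    rw [dec0sD]
    exact inf_le_right.trans (sumIcc_mono Vs (by omega) le_rfl)
  · refine sumIcc_le fun j h1 h2 => ?_
    rw [dec0sD]
    exact inf_le_left.trans (sumIcc_mono Vs' le_rfl (by omega))
  · rw [inf_comm]
    exact Z1 hTD m

lemma FlagQ_F (m : ℤ) :
    sumIcc Vs 0 ((d : ℤ) - m) ≤ sumIcc (dec0s0 d Vs Vs') m (d : ℤ) := by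
  have htop := span_split_top (Q_span hTD) Q_bot_lt Q_bot_gt (m - 1)
  rw [show m - 1 + 1 = m by ring] at htop
  refine le_of_top_sup (X := sumIcc Vs' 0 (m - 1))
    (W := sumIcc Vs 0 ((d : ℤ) - m)) htop ?_ ?_ le_rfl ?_
  · refine sumIcc_le fun j h1 h2 => ?_
    rw [dec0s0]
    exact inf_le_left.trans (sumIcc_mono Vs' le_rfl (by omega))
  · refine sumIcc_le fun j h1 h2 => ?_
    rw [dec0s0]
    exact inf_le_right.trans (sumIcc_mono Vs le_rfl (by omega))
  · have := Z2 hTD (m - 1)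
    rwa [show (d : ℤ) - (m - 1) - 1 = (d : ℤ) - m by ring] at this

lemma FlagQ_Fs (m : ℤ) :
    sumIcc Vs' 0 m ≤ sumIcc (dec0s0 d Vs Vs') 0 m := by
  have htop := span_split_top (Q_span hTD) Q_bot_lt Q_bot_gt m
  rw [sup_comm] at htop
  refine le_of_top_sup (X := sumIcc Vs 0 ((d : ℤ) - m - 1))
    (W := sumIcc Vs' 0 m) htop ?_ ?_ le_rfl ?_
  · refine sumIcc_le fun j h1 h2 => ?_
    rw [dec0s0]
    exact inf_le_right.trans (sumIcc_mono Vs le_rfl (by omega))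
  · refine sumIcc_le fun j h1 h2 => ?_
    rw [dec0s0]
    exact inf_le_left.trans (sumIcc_mono Vs' le_rfl (by omega))
  · rw [inf_comm]
    exact Z2 hTD m

lemma FlagX_Gs (m : ℤ) :
    sumIcc Vs' ((d : ℤ) - m) (d : ℤ) ≤ sumIcc (decDsD d Vs Vs') 0 m := by
  have htop := span_split_top (X_span hTD) X_bot_lt X_bot_gt m
  rw [sup_comm] at htop
  refine le_of_top_sup (X := sumIcc Vs (m + 1) (d : ℤ))
    (W := sumIcc Vs' ((d : ℤ) - m) (d : ℤ)) htop ?_ ?_ le_rfl ?_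
  · refine sumIcc_le fun j h1 h2 => ?_
    rw [decDsD]
    exact inf_le_right.trans (sumIcc_mono Vs (by omega) le_rfl)
  · refine sumIcc_le fun j h1 h2 => ?_
    rw [decDsD]
    exact inf_le_left.trans (sumIcc_mono Vs' (by omega) le_rfl)
  · rw [inf_comm]
    exact Z4 hTD m

end Finrank

section Kaction

variable {q a a' : K} {Ks Ksinv : Module.End K V}

omit hTD in
lemma Ksinv_eig (hq0 : q ≠ 0)
    (hKs : ∀ i : ℤ, 0 ≤ i → i ≤ (d : ℤ) → ∀ v ∈ decDs0 d Vs Vs' i,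
      Ks v = (q ^ (2 * i - (d : ℤ))) • v)
    (hKsinv2 : Ksinv * Ks = 1) :
    ∀ i : ℤ, 0 ≤ i → i ≤ (d : ℤ) → ∀ w ∈ decDs0 d Vs Vs' i,
      Ksinv w = (q ^ ((d : ℤ) - 2 * i)) • w := by
  intro i h1 h2 w hw
  have hap : Ksinv (Ks w) = w := by
    have := LinearMap.congr_fun hKsinv2 w
    simpa [Module.End.mul_apply, Module.End.one_apply] using this
  rw [hKs i h1 h2 w hw, map_smul] at hap
  have hprod : q ^ ((d : ℤ) - 2 * i) * q ^ (2 * i - (d : ℤ)) = 1 := by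
    rw [← zpow_add₀ hq0, show (d : ℤ) - 2 * i + (2 * i - (d : ℤ)) = 0 by ring, zpow_zero]
  calc Ksinv w = (q ^ ((d : ℤ) - 2 * i) * q ^ (2 * i - (d : ℤ))) • Ksinv w := by
        rw [hprod, one_smul]
    _ = q ^ ((d : ℤ) - 2 * i) • (q ^ (2 * i - (d : ℤ)) • Ksinv w) := by rw [mul_smul]
    _ = q ^ ((d : ℤ) - 2 * i) • w := by rw [hap]

variable [FiniteDimensional K V]

lemma qF_Ks
    (hKs : ∀ i : ℤ, 0 ≤ i → i ≤ (d : ℤ) → ∀ v ∈ decDs0 d Vs Vs' i,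
      Ks v = (q ^ (2 * i - (d : ℤ))) • v) :
    ∀ i : ℤ, 0 ≤ i → ∀ v ∈ sumIcc Vs 0 ((d : ℤ) - i),
      Ks v - (q ^ (2 * i - (d : ℤ))) • v ∈ sumIcc Vs 0 ((d : ℤ) - i - 1) := by
  intro i hi v hv
  have hv' := FlagW_F hTD i hv
  have key : ∀ w ∈ sumIcc (decDs0 d Vs Vs') i (d : ℤ),
      (Ks - (q ^ (2 * i - (d : ℤ))) • 1) w ∈ sumIcc Vs 0 ((d : ℤ) - i - 1) := by
    refine sumIcc_apply_le fun j h1 h2 w hw => ?_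
    rw [end_sub_smul_apply, hKs j (hi.trans h1) h2 w hw, ← sub_smul]
    rcases eq_or_lt_of_le h1 with rfl | hlt
    · simp
    · refine Submodule.smul_mem _ _ ?_
      have hle : decDs0 d Vs Vs' j ≤ sumIcc Vs 0 ((d : ℤ) - i - 1) := by
        rw [decDs0]
        exact inf_le_right.trans (sumIcc_mono Vs le_rfl (by omega))
      exact hle hw
  have := key v hv'
  rwa [end_sub_smul_apply] at this

lemma qF_Ksinv (hq0 : q ≠ 0)
    (hKs : ∀ i : ℤ, 0 ≤ i → i ≤ (d : ℤ) → ∀ v ∈ decDs0 d Vs Vs' i,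
      Ks v = (q ^ (2 * i - (d : ℤ))) • v)
    (hKsinv2 : Ksinv * Ks = 1) :
    ∀ i : ℤ, 0 ≤ i → ∀ v ∈ sumIcc Vs 0 ((d : ℤ) - i),
      Ksinv v - (q ^ ((d : ℤ) - 2 * i)) • v ∈ sumIcc Vs 0 ((d : ℤ) - i - 1) := by
  intro i hi v hv
  have hv' := FlagW_F hTD i hv
  have key : ∀ w ∈ sumIcc (decDs0 d Vs Vs') i (d : ℤ),
      (Ksinv - (q ^ ((d : ℤ) - 2 * i)) • 1) w ∈ sumIcc Vs 0 ((d : ℤ) - i - 1) := by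
    refine sumIcc_apply_le fun j h1 h2 w hw => ?_
    rw [end_sub_smul_apply, Ksinv_eig hq0 hKs hKsinv2 j (hi.trans h1) h2 w hw, ← sub_smul]
    rcases eq_or_lt_of_le h1 with rfl | hlt
    · simp
    · refine Submodule.smul_mem _ _ ?_
      have hle : decDs0 d Vs Vs' j ≤ sumIcc Vs 0 ((d : ℤ) - i - 1) := by
        rw [decDs0]
        exact inf_le_right.trans (sumIcc_mono Vs le_rfl (by omega))
      exact hle hw
  have := key v hv'
  rwa [end_sub_smul_apply] at this

lemma qGs_Ks
    (hKs : ∀ i : ℤ, 0 ≤ i → i ≤ (d : ℤ) → ∀ v ∈ decDs0 d Vs Vs' i,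
      Ks v = (q ^ (2 * i - (d : ℤ))) • v) :
    ∀ i : ℤ, i ≤ (d : ℤ) → ∀ v ∈ sumIcc Vs' ((d : ℤ) - i) (d : ℤ),
      Ks v - (q ^ (2 * i - (d : ℤ))) • v ∈ sumIcc Vs' ((d : ℤ) - i + 1) (d : ℤ) := by
  intro i hi v hv
  have hv' := FlagW_Gs hTD i hv
  have key : ∀ w ∈ sumIcc (decDs0 d Vs Vs') 0 i,
      (Ks - (q ^ (2 * i - (d : ℤ))) • 1) w ∈ sumIcc Vs' ((d : ℤ) - i + 1) (d : ℤ) := by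
    refine sumIcc_apply_le fun j h1 h2 w hw => ?_
    rw [end_sub_smul_apply, hKs j h1 (h2.trans hi) w hw, ← sub_smul]
    rcases eq_or_lt_of_le h2 with rfl | hlt
    · simp
    · refine Submodule.smul_mem _ _ ?_
      have hle : decDs0 d Vs Vs' j ≤ sumIcc Vs' ((d : ℤ) - i + 1) (d : ℤ) := by
        rw [decDs0]
        exact inf_le_left.trans (sumIcc_mono Vs' (by omega) le_rfl)
      exact hle hw
  have := key v hv'
  rwa [end_sub_smul_apply] at this

lemma qGs_Ksinv (hq0 : q ≠ 0)
    (hKs : ∀ i : ℤ, 0 ≤ i → i ≤ (d : ℤ) → ∀ v ∈ decDs0 d Vs Vs' i,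
      Ks v = (q ^ (2 * i - (d : ℤ))) • v)
    (hKsinv2 : Ksinv * Ks = 1) :
    ∀ i : ℤ, i ≤ (d : ℤ) → ∀ v ∈ sumIcc Vs' ((d : ℤ) - i) (d : ℤ),
      Ksinv v - (q ^ ((d : ℤ) - 2 * i)) • v ∈ sumIcc Vs' ((d : ℤ) - i + 1) (d : ℤ) := by
  intro i hi v hv
  have hv' := FlagW_Gs hTD i hv
  have key : ∀ w ∈ sumIcc (decDs0 d Vs Vs') 0 i,
      (Ksinv - (q ^ ((d : ℤ) - 2 * i)) • 1) w ∈ sumIcc Vs' ((d : ℤ) - i + 1) (d : ℤ) := by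
    refine sumIcc_apply_le fun j h1 h2 w hw => ?_
    rw [end_sub_smul_apply, Ksinv_eig hq0 hKs hKsinv2 j h1 (h2.trans hi) w hw, ← sub_smul]
    rcases eq_or_lt_of_le h2 with rfl | hlt
    · simp
    · refine Submodule.smul_mem _ _ ?_
      have hle : decDs0 d Vs Vs' j ≤ sumIcc Vs' ((d : ℤ) - i + 1) (d : ℤ) := by
        rw [decDs0]
        exact inf_le_left.trans (sumIcc_mono Vs' (by omega) le_rfl)
      exact hle hw
  have := key v hv'
  rwa [end_sub_smul_apply] at this

lemma rel_Ks (hq0 : q ≠ 0)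
    (hθ : ∀ i : ℤ, 0 ≤ i → i ≤ (d : ℤ) → θ i = a * q ^ (2 * i - (d : ℤ)))
    (hKs : ∀ i : ℤ, 0 ≤ i → i ≤ (d : ℤ) → ∀ v ∈ decDs0 d Vs Vs' i,
      Ks v = (q ^ (2 * i - (d : ℤ))) • v) :
    ∀ v : V, A (Ks v) = (q ^ (-2 : ℤ)) • Ks (A v) + (a * (1 - q ^ (-2 : ℤ))) • v := by
  intro v
  have hvtop : v ∈ sumIcc (decDs0 d Vs Vs') 0 (d : ℤ) := by
    rw [span_sumIcc_top (W_span hTD) W_bot_lt W_bot_gt]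
    exact Submodule.mem_top
  have key : ∀ w ∈ sumIcc (decDs0 d Vs Vs') 0 (d : ℤ),
      (A * Ks - (q ^ (-2 : ℤ)) • (Ks * A) - (a * (1 - q ^ (-2 : ℤ))) • 1) w
        ∈ (⊥ : Submodule K V) := by
    refine sumIcc_apply_le fun j h1 h2 w hw => ?_
    simp only [LinearMap.sub_apply, LinearMap.smul_apply, Module.End.mul_apply,
      Module.End.one_apply, Submodule.mem_bot]
    obtain ⟨r, hr, hAw⟩ : ∃ r, r ∈ decDs0 d Vs Vs' (j + 1) ∧
        A w = θ ((d : ℤ) - j) • w + r :=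
      ⟨A w - θ ((d : ℤ) - j) • w, W_raise hTD j w hw, by abel⟩
    have hKsw : Ks w = (q ^ (2 * j - (d : ℤ))) • w := hKs j h1 h2 w hw
    have hKsr : Ks r = (q ^ (2 * j - (d : ℤ)) * q ^ (2 : ℤ)) • r := by
      rcases le_or_gt (j + 1) (d : ℤ) with h | h
      · rw [hKs (j + 1) (by omega) h r hr]
        congr 1
        rw [← zpow_add₀ hq0]
        congr 1
        ring
      · have hbot : decDs0 d Vs Vs' (j + 1) = ⊥ := W_bot_gt _ (by omega)
        rw [hbot, Submodule.mem_bot] at hr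
        rw [hr, map_zero, smul_zero]
    have hθv : θ ((d : ℤ) - j) = a * q ^ ((d : ℤ) - 2 * j) := by
      rw [hθ ((d : ℤ) - j) (by omega) (by omega)]
      congr 1
      congr 1
      ring
    have hst : q ^ (2 * j - (d : ℤ)) * q ^ ((d : ℤ) - 2 * j) = 1 := by
      rw [← zpow_add₀ hq0, show 2 * j - (d : ℤ) + ((d : ℤ) - 2 * j) = 0 by ring, zpow_zero]
    have huv : q ^ (-2 : ℤ) * q ^ (2 : ℤ) = 1 := by
      rw [← zpow_add₀ hq0, show (-2 : ℤ) + 2 = 0 by ring, zpow_zero]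
    rw [hKsw, map_smul, hAw, map_add, map_smul, hKsw, hKsr, hθv]
    match_scalars
    · linear_combination (a * (1 - q ^ (-2 : ℤ))) * hst
    · linear_combination (-(q ^ (2 * j - (d : ℤ)))) * huv
  have h := key v hvtop
  simp only [LinearMap.sub_apply, LinearMap.smul_apply, Module.End.mul_apply,
    Module.End.one_apply, Submodule.mem_bot] at h
  rw [sub_sub] at h
  exact sub_eq_zero.mp h

lemma rel_Ksinv (hq0 : q ≠ 0)
    (hθ' : ∀ i : ℤ, 0 ≤ i → i ≤ (d : ℤ) → θ' i = a' * q ^ ((d : ℤ) - 2 * i))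
    (hKs : ∀ i : ℤ, 0 ≤ i → i ≤ (d : ℤ) → ∀ v ∈ decDs0 d Vs Vs' i,
      Ks v = (q ^ (2 * i - (d : ℤ))) • v)
    (hKsinv2 : Ksinv * Ks = 1) :
    ∀ v : V, A' (Ksinv v) = (q ^ (-2 : ℤ)) • Ksinv (A' v) + (a' * (1 - q ^ (-2 : ℤ))) • v := by
  intro v
  have hvtop : v ∈ sumIcc (decDs0 d Vs Vs') 0 (d : ℤ) := by
    rw [span_sumIcc_top (W_span hTD) W_bot_lt W_bot_gt]
    exact Submodule.mem_top
  have key : ∀ w ∈ sumIcc (decDs0 d Vs Vs') 0 (d : ℤ),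
      (A' * Ksinv - (q ^ (-2 : ℤ)) • (Ksinv * A') - (a' * (1 - q ^ (-2 : ℤ))) • 1) w
        ∈ (⊥ : Submodule K V) := by
    refine sumIcc_apply_le fun j h1 h2 w hw => ?_
    simp only [LinearMap.sub_apply, LinearMap.smul_apply, Module.End.mul_apply,
      Module.End.one_apply, Submodule.mem_bot]
    obtain ⟨r, hr, hAw⟩ : ∃ r, r ∈ decDs0 d Vs Vs' (j - 1) ∧
        A' w = θ' ((d : ℤ) - j) • w + r :=
      ⟨A' w - θ' ((d : ℤ) - j) • w, W_lower hTD j w hw, by abel⟩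
    have hKw : Ksinv w = (q ^ ((d : ℤ) - 2 * j)) • w :=
      Ksinv_eig hq0 hKs hKsinv2 j h1 h2 w hw
    have hKr : Ksinv r = (q ^ ((d : ℤ) - 2 * j) * q ^ (2 : ℤ)) • r := by
      rcases le_or_gt 0 (j - 1) with h | h
      · rw [Ksinv_eig hq0 hKs hKsinv2 (j - 1) h (by omega) r hr]
        congr 1
        rw [← zpow_add₀ hq0]
        congr 1
        ring
      · have hbot : decDs0 d Vs Vs' (j - 1) = ⊥ := W_bot_lt _ (by omega)
        rw [hbot, Submodule.mem_bot] at hr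
        rw [hr, map_zero, smul_zero]
    have hθv : θ' ((d : ℤ) - j) = a' * q ^ (2 * j - (d : ℤ)) := by
      rw [hθ' ((d : ℤ) - j) (by omega) (by omega)]
      congr 1
      congr 1
      ring
    have hst : q ^ ((d : ℤ) - 2 * j) * q ^ (2 * j - (d : ℤ)) = 1 := by
      rw [← zpow_add₀ hq0, show (d : ℤ) - 2 * j + (2 * j - (d : ℤ)) = 0 by ring, zpow_zero]
    have huv : q ^ (-2 : ℤ) * q ^ (2 : ℤ) = 1 := by
      rw [← zpow_add₀ hq0, show (-2 : ℤ) + 2 = 0 by ring, zpow_zero]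
    rw [hKw, map_smul, hAw, map_add, map_smul, hKw, hKr, hθv]
    match_scalars
    · linear_combination (a' * (1 - q ^ (-2 : ℤ))) * hst
    · linear_combination (-(q ^ ((d : ℤ) - 2 * j))) * huv
  have h := key v hvtop
  simp only [LinearMap.sub_apply, LinearMap.smul_apply, Module.End.mul_apply,
    Module.End.one_apply, Submodule.mem_bot] at h
  rw [sub_sub] at h
  exact sub_eq_zero.mp h

lemma comp_Ks (hq0 : q ≠ 0) (hq : ∀ n : ℕ, 0 < n → q ^ n ≠ 1) (ha : a ≠ 0)
    (hθ : ∀ i : ℤ, 0 ≤ i → i ≤ (d : ℤ) → θ i = a * q ^ (2 * i - (d : ℤ)))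
    (hKs : ∀ i : ℤ, 0 ≤ i → i ≤ (d : ℤ) → ∀ v ∈ decDs0 d Vs Vs' i,
      Ks v = (q ^ (2 * i - (d : ℤ))) • v) :
    ∀ j : ℤ, 0 ≤ j → j ≤ (d : ℤ) → ∀ v ∈ Vs j, Ks v ∈ Vs (j - 1) ⊔ Vs j := by
  classical
  intro j hj1 hj2 v hv
  have hAv : A v = θ j • v := hTD.eig j v hv
  have hAu : A (Ks v) = (q ^ (-2 : ℤ) * θ j) • Ks v + (a * (1 - q ^ (-2 : ℤ))) • v := by
    rw [rel_Ks hTD hq0 hθ hKs v, hAv, map_smul, smul_smul]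
  set μ := q ^ (-2 : ℤ) * θ j with hμ
  have hwv : A (Ks v) - μ • Ks v ∈ Vs j := by
    rw [hAu, add_sub_cancel_left]
    exact Submodule.smul_mem _ _ hv
  have hutop : Ks v ∈ sumIcc Vs 0 (d : ℤ) := by
    rw [hTD.decompV.sumIcc_eq_top]
    exact Submodule.mem_top
  obtain ⟨cf, hcmem, hcr, hcs⟩ := mem_sumIcc_decomp hutop
  set t : Finset ℤ := insert j cf.support with ht
  have hsum1 : ∑ l ∈ cf.support, ((θ l - μ) • cf l) = A (Ks v) - μ • Ks v := by
    conv_rhs => rw [← hcs]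
    rw [map_sum, Finset.smul_sum, ← Finset.sum_sub_distrib]
    refine Finset.sum_congr rfl fun l hl => ?_
    rw [hTD.eig l _ (hcmem l), sub_smul]
  have hsum2 : ∑ l ∈ t, ((θ l - μ) • cf l) = A (Ks v) - μ • Ks v := by
    rw [← hsum1]
    refine (Finset.sum_subset (Finset.subset_insert j _) fun l _ hl => ?_).symm
    rw [Finsupp.notMem_support_iff.mp hl, smul_zero]
  have hesum : ∑ l ∈ t, ((θ l - μ) • cf l - (if l = j then A (Ks v) - μ • Ks v else 0)) = 0 := by
    rw [Finset.sum_sub_distrib, hsum2, Finset.sum_ite_eq' t j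
      (fun _ => A (Ks v) - μ • Ks v), if_pos (Finset.mem_insert_self j _), sub_self]
  have hezero := indep_finset_zero hTD.decompV.indep t
    (fun l => (θ l - μ) • cf l - (if l = j then A (Ks v) - μ • Ks v else 0))
    (fun l => by
      show (θ l - μ) • cf l - (if l = j then A (Ks v) - μ • Ks v else 0) ∈ Vs l
      by_cases h : l = j
      · rw [if_pos h, h]
        exact sub_mem (Submodule.smul_mem _ _ (hcmem j)) hwv
      · rw [if_neg h, sub_zero]
        exact Submodule.smul_mem _ _ (hcmem l))
    (fun l hl => by
      show (θ l - μ) • cf l - (if l = j then A (Ks v) - μ • Ks v else 0) = 0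
      have h1 : l ≠ j := fun h => hl (h ▸ Finset.mem_insert_self j _)
      have h2 : cf l = 0 := Finsupp.notMem_support_iff.mp
        (fun h => hl (Finset.mem_insert_of_mem h))
      rw [if_neg h1, h2, smul_zero, sub_zero])
    hesum
  rw [← hcs]
  refine Submodule.sum_mem _ fun l hl => ?_
  by_cases h1 : l = j
  · subst h1
    exact Submodule.mem_sup_right (hcmem l)
  by_cases h2 : l = j - 1
  · subst h2
    exact Submodule.mem_sup_left (hcmem _)
  · have h3 := hezero l
    simp only [if_neg h1, sub_zero] at h3
    obtain ⟨hr1, hr2⟩ := hcr l (Finsupp.mem_support_iff.mp hl)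
    have hne : θ l - μ ≠ 0 := by
      rw [hμ, hθ l hr1 hr2, hθ j hj1 hj2]
      intro hcon
      have h4 : a * q ^ (2 * l - (d : ℤ)) = q ^ (-2 : ℤ) * (a * q ^ (2 * j - (d : ℤ))) :=
        sub_eq_zero.mp hcon
      rw [mul_left_comm] at h4
      have h5 := mul_left_cancel₀ ha h4
      rw [← zpow_add₀ hq0] at h5
      have h6 := q_zpow_inj hq0 hq h5
      omega
    have hcf : cf l = 0 := by
      rcases smul_eq_zero.mp h3 with h | h
      · exact absurd h hne
      · exact h
    rw [hcf]
    exact Submodule.zero_mem _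

lemma comp_Ksinv (hq0 : q ≠ 0) (hq : ∀ n : ℕ, 0 < n → q ^ n ≠ 1) (ha' : a' ≠ 0)
    (hθ' : ∀ i : ℤ, 0 ≤ i → i ≤ (d : ℤ) → θ' i = a' * q ^ ((d : ℤ) - 2 * i))
    (hKs : ∀ i : ℤ, 0 ≤ i → i ≤ (d : ℤ) → ∀ v ∈ decDs0 d Vs Vs' i,
      Ks v = (q ^ (2 * i - (d : ℤ))) • v)
    (hKsinv2 : Ksinv * Ks = 1) :
    ∀ j : ℤ, 0 ≤ j → j ≤ (d : ℤ) → ∀ v ∈ Vs' j, Ksinv v ∈ Vs' j ⊔ Vs' (j + 1) := by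
  classical
  intro j hj1 hj2 v hv
  have hAv : A' v = θ' j • v := hTD.eig' j v hv
  have hAu : A' (Ksinv v) =
      (q ^ (-2 : ℤ) * θ' j) • Ksinv v + (a' * (1 - q ^ (-2 : ℤ))) • v := by
    rw [rel_Ksinv hTD hq0 hθ' hKs hKsinv2 v, hAv, map_smul, smul_smul]
  set μ := q ^ (-2 : ℤ) * θ' j with hμ
  have hwv : A' (Ksinv v) - μ • Ksinv v ∈ Vs' j := by
    rw [hAu, add_sub_cancel_left]
    exact Submodule.smul_mem _ _ hv
  have hutop : Ksinv v ∈ sumIcc Vs' 0 (d : ℤ) := by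
    rw [hTD.decompV'.sumIcc_eq_top]
    exact Submodule.mem_top
  obtain ⟨cf, hcmem, hcr, hcs⟩ := mem_sumIcc_decomp hutop
  set t : Finset ℤ := insert j cf.support with ht
  have hsum1 : ∑ l ∈ cf.support, ((θ' l - μ) • cf l) = A' (Ksinv v) - μ • Ksinv v := by
    conv_rhs => rw [← hcs]
    rw [map_sum, Finset.smul_sum, ← Finset.sum_sub_distrib]
    refine Finset.sum_congr rfl fun l hl => ?_
    rw [hTD.eig' l _ (hcmem l), sub_smul]
  have hsum2 : ∑ l ∈ t, ((θ' l - μ) • cf l) = A' (Ksinv v) - μ • Ksinv v := by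
    rw [← hsum1]
    refine (Finset.sum_subset (Finset.subset_insert j _) fun l _ hl => ?_).symm
    rw [Finsupp.notMem_support_iff.mp hl, smul_zero]
  have hesum : ∑ l ∈ t,
      ((θ' l - μ) • cf l - (if l = j then A' (Ksinv v) - μ • Ksinv v else 0)) = 0 := by
    rw [Finset.sum_sub_distrib, hsum2, Finset.sum_ite_eq' t j
      (fun _ => A' (Ksinv v) - μ • Ksinv v), if_pos (Finset.mem_insert_self j _), sub_self]
  have hezero := indep_finset_zero hTD.decompV'.indep t
    (fun l => (θ' l - μ) • cf l - (if l = j then A' (Ksinv v) - μ • Ksinv v else 0))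
    (fun l => by
      show (θ' l - μ) • cf l - (if l = j then A' (Ksinv v) - μ • Ksinv v else 0) ∈ Vs' l
      by_cases h : l = j
      · rw [if_pos h, h]
        exact sub_mem (Submodule.smul_mem _ _ (hcmem j)) hwv
      · rw [if_neg h, sub_zero]
        exact Submodule.smul_mem _ _ (hcmem l))
    (fun l hl => by
      show (θ' l - μ) • cf l - (if l = j then A' (Ksinv v) - μ • Ksinv v else 0) = 0
      have h1 : l ≠ j := fun h => hl (h ▸ Finset.mem_insert_self j _)
      have h2 : cf l = 0 := Finsupp.notMem_support_iff.mp
        (fun h => hl (Finset.mem_insert_of_mem h))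
      rw [if_neg h1, h2, smul_zero, sub_zero])
    hesum
  rw [← hcs]
  refine Submodule.sum_mem _ fun l hl => ?_
  by_cases h1 : l = j
  · subst h1
    exact Submodule.mem_sup_left (hcmem l)
  by_cases h2 : l = j + 1
  · subst h2
    exact Submodule.mem_sup_right (hcmem _)
  · have h3 := hezero l
    simp only [if_neg h1, sub_zero] at h3
    obtain ⟨hr1, hr2⟩ := hcr l (Finsupp.mem_support_iff.mp hl)
    have hne : θ' l - μ ≠ 0 := by
      rw [hμ, hθ' l hr1 hr2, hθ' j hj1 hj2]
      intro hcon
      have h4 : a' * q ^ ((d : ℤ) - 2 * l) = q ^ (-2 : ℤ) * (a' * q ^ ((d : ℤ) - 2 * j)) :=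
        sub_eq_zero.mp hcon
      rw [mul_left_comm] at h4
      have h5 := mul_left_cancel₀ ha' h4
      rw [← zpow_add₀ hq0] at h5
      have h6 := q_zpow_inj hq0 hq h5
      omega
    have hcf : cf l = 0 := by
      rcases smul_eq_zero.mp h3 with h | h
      · exact absurd h hne
      · exact h
    rw [hcf]
    exact Submodule.zero_mem _

lemma Ks_G (hq0 : q ≠ 0) (hq : ∀ n : ℕ, 0 < n → q ^ n ≠ 1) (ha : a ≠ 0)
    (hθ : ∀ i : ℤ, 0 ≤ i → i ≤ (d : ℤ) → θ i = a * q ^ (2 * i - (d : ℤ)))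
    (hKs : ∀ i : ℤ, 0 ≤ i → i ≤ (d : ℤ) → ∀ v ∈ decDs0 d Vs Vs' i,
      Ks v = (q ^ (2 * i - (d : ℤ))) • v) :
    ∀ m : ℤ, ∀ v ∈ sumIcc Vs m (d : ℤ), Ks v ∈ sumIcc Vs (m - 1) (d : ℤ) := by
  intro m
  refine sumIcc_apply_le fun j h1 h2 w hw => ?_
  rcases lt_or_ge j 0 with h | h
  · rw [hTD.decompV.bot_of_lt j h, Submodule.mem_bot] at hw
    rw [hw, map_zero]
    exact Submodule.zero_mem _
  · have hm := comp_Ks hTD hq0 hq ha hθ hKs j h h2 w hw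
    exact (sup_le (le_sumIcc Vs (by omega) (by omega)) (le_sumIcc Vs (by omega) h2)) hm

lemma Ksinv_Fs (hq0 : q ≠ 0) (hq : ∀ n : ℕ, 0 < n → q ^ n ≠ 1) (ha' : a' ≠ 0)
    (hθ' : ∀ i : ℤ, 0 ≤ i → i ≤ (d : ℤ) → θ' i = a' * q ^ ((d : ℤ) - 2 * i))
    (hKs : ∀ i : ℤ, 0 ≤ i → i ≤ (d : ℤ) → ∀ v ∈ decDs0 d Vs Vs' i,
      Ks v = (q ^ (2 * i - (d : ℤ))) • v)
    (hKsinv2 : Ksinv * Ks = 1) :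
    ∀ m : ℤ, ∀ v ∈ sumIcc Vs' 0 m, Ksinv v ∈ sumIcc Vs' 0 (m + 1) := by
  intro m
  refine sumIcc_apply_le fun j h1 h2 w hw => ?_
  rcases le_or_gt j (d : ℤ) with h | h
  · have hm := comp_Ksinv hTD hq0 hq ha' hθ' hKs hKsinv2 j h1 h w hw
    exact (sup_le (le_sumIcc Vs' h1 (by omega)) (le_sumIcc Vs' (by omega) (by omega))) hm
  · rw [hTD.decompV'.bot_of_gt j h, Submodule.mem_bot] at hw
    rw [hw, map_zero]
    exact Submodule.zero_mem _

end Kaction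

end TDP

end Aux

/-- the actions of `K*` and `K*⁻¹` on the six decompositions. -/
theorem stmt11 {K : Type*} [Field K] [IsAlgClosed K]
    {V : Type*} [AddCommGroup V] [Module K V] [FiniteDimensional K V] [Nontrivial V]
    (q : K) (hq0 : q ≠ 0) (hq : ∀ n : ℕ, 0 < n → q ^ n ≠ 1)
    (A A' : Module.End K V) (d : ℕ) (Vs Vs' : ℤ → Submodule K V) (θ θ' : ℤ → K)
    (hTD : IsTridiagonalPair A A' d Vs Vs' θ θ')
    (a a' : K) (ha : a ≠ 0) (ha' : a' ≠ 0)
    (hθ : ∀ i : ℤ, 0 ≤ i → i ≤ (d : ℤ) → θ i = a * q ^ (2 * i - (d : ℤ)))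
    (hθ' : ∀ i : ℤ, 0 ≤ i → i ≤ (d : ℤ) → θ' i = a' * q ^ ((d : ℤ) - 2 * i))
    (b b' : K) (hb : b ≠ 0) (hb' : b' ≠ 0)
    (B : Module.End K V)
    (hB : ∀ i : ℤ, 0 ≤ i → i ≤ (d : ℤ) → ∀ v ∈ dec0s0 d Vs Vs' i,
      B v = (b * q ^ (2 * i - (d : ℤ))) • v)
    (B' : Module.End K V)
    (hB' : ∀ i : ℤ, 0 ≤ i → i ≤ (d : ℤ) → ∀ v ∈ decDsD d Vs Vs' i,
      B' v = (b' * q ^ ((d : ℤ) - 2 * i)) • v)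
    (Kop : Module.End K V)
    (hKop : ∀ i : ℤ, 0 ≤ i → i ≤ (d : ℤ) → ∀ v ∈ dec0sD d Vs Vs' i,
      Kop v = (q ^ (2 * i - (d : ℤ))) • v)
    (Ks : Module.End K V)
    (hKs : ∀ i : ℤ, 0 ≤ i → i ≤ (d : ℤ) → ∀ v ∈ decDs0 d Vs Vs' i,
      Ks v = (q ^ (2 * i - (d : ℤ))) • v)
    (Kinv Ksinv : Module.End K V)
    (hKinv1 : Kop * Kinv = 1) (hKinv2 : Kinv * Kop = 1)
    (hKsinv1 : Ks * Ksinv = 1) (hKsinv2 : Ksinv * Ks = 1)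
    :
    ∀ i : ℤ, 0 ≤ i → i ≤ (d : ℤ) →
      -- [0D]
      (Submodule.map (Ks - q ^ ((d : ℤ) - 2 * i) • 1) (dec0D Vs i) ≤ dec0D Vs (i - 1) ∧
        Submodule.map (Ksinv - q ^ (2 * i - (d : ℤ)) • 1) (dec0D Vs i) ≤
          sumIcc (dec0D Vs) 0 (i - 1)) ∧
      -- [0*D*]
      (Submodule.map (Ks - q ^ ((d : ℤ) - 2 * i) • 1) (dec0sDs Vs' i) ≤
          sumIcc (dec0sDs Vs') (i + 1) (d : ℤ) ∧
        Submodule.map (Ksinv - q ^ (2 * i - (d : ℤ)) • 1) (dec0sDs Vs' i) ≤ dec0sDs Vs' (i + 1)) ∧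
      -- [0*D]
      (Submodule.map Ks (dec0sD d Vs Vs' i) ≤ sumIcc (dec0sD d Vs Vs') (i - 1) (d : ℤ) ∧
        Submodule.map Ksinv (dec0sD d Vs Vs' i) ≤ sumIcc (dec0sD d Vs Vs') 0 (i + 1)) ∧
      -- [0*0]
      (Submodule.map (Ks - q ^ (2 * i - (d : ℤ)) • 1) (dec0s0 d Vs Vs' i) ≤
          sumIcc (dec0s0 d Vs Vs') (i + 1) (d : ℤ) ∧
        Submodule.map (Ksinv - q ^ ((d : ℤ) - 2 * i) • 1) (dec0s0 d Vs Vs' i) ≤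
          dec0s0 d Vs Vs' (i + 1)) ∧
      -- [D*0]
      (Submodule.map (Ks - q ^ (2 * i - (d : ℤ)) • 1) (decDs0 d Vs Vs' i) = ⊥ ∧
        Submodule.map (Ksinv - q ^ ((d : ℤ) - 2 * i) • 1) (decDs0 d Vs Vs' i) = ⊥) ∧
      -- [D*D]
      (Submodule.map (Ks - q ^ (2 * i - (d : ℤ)) • 1) (decDsD d Vs Vs' i) ≤
          decDsD d Vs Vs' (i - 1) ∧
        Submodule.map (Ksinv - q ^ ((d : ℤ) - 2 * i) • 1) (decDsD d Vs Vs' i) ≤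
          sumIcc (decDsD d Vs Vs') 0 (i - 1)) := by
  intro i hi1 hi2
  have hd0 : (0 : ℤ) ≤ (d : ℤ) := le_trans hi1 hi2
  refine ⟨⟨?_, ?_⟩, ⟨?_, ?_⟩, ⟨?_, ?_⟩, ⟨?_, ?_⟩, ⟨?_, ?_⟩, ⟨?_, ?_⟩⟩
  -- [0D] (a)
  · rintro _ ⟨v, hv, rfl⟩
    rw [end_sub_smul_apply]
    have hvV : v ∈ Vs i := hv
    have h1 : Ks v - q ^ ((d : ℤ) - 2 * i) • v ∈ sumIcc Vs (i - 1) i := by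
      have hK := comp_Ks hTD hq0 hq ha hθ hKs i hi1 hi2 v hvV
      have hle : Vs (i - 1) ⊔ Vs i ≤ sumIcc Vs (i - 1) i :=
        sup_le (le_sumIcc Vs le_rfl (by omega)) (le_sumIcc Vs (by omega) le_rfl)
      exact sub_mem (hle hK) (le_sumIcc Vs (by omega) le_rfl
        (Submodule.smul_mem _ _ hvV))
    have h2 : Ks v - q ^ ((d : ℤ) - 2 * i) • v ∈ sumIcc Vs 0 (i - 1) := by
      have hv' : v ∈ sumIcc Vs 0 ((d : ℤ) - ((d : ℤ) - i)) := by
        rw [show (d : ℤ) - ((d : ℤ) - i) = i by ring]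
        exact le_sumIcc Vs hi1 le_rfl hvV
      have h := qF_Ks hTD hKs ((d : ℤ) - i) (by omega) v hv'
      rwa [show 2 * ((d : ℤ) - i) - (d : ℤ) = (d : ℤ) - 2 * i by ring,
        show (d : ℤ) - ((d : ℤ) - i) - 1 = i - 1 by ring] at h
    have h3 := sumIcc_inf_sumIcc_le hTD.decompV.indep
      (m := i - 1) (n := i) (m' := 0) (n' := i - 1) ⟨h1, h2⟩
    have hle : sumIcc Vs (max (i - 1) 0) (min i (i - 1)) ≤ Vs (i - 1) := by
      rcases le_or_gt 1 i with h | h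
      · rw [show max (i - 1) 0 = i - 1 by omega, show min i (i - 1) = i - 1 by omega,
          sumIcc_self]
      · rw [sumIcc_bot (by omega)]
        exact bot_le
    exact hle h3
  -- [0D] (b)
  · rintro _ ⟨v, hv, rfl⟩
    rw [end_sub_smul_apply]
    have hvV : v ∈ Vs i := hv
    have hv' : v ∈ sumIcc Vs 0 ((d : ℤ) - ((d : ℤ) - i)) := by
      rw [show (d : ℤ) - ((d : ℤ) - i) = i by ring]
      exact le_sumIcc Vs hi1 le_rfl hvV
    have h := qF_Ksinv hTD hq0 hKs hKsinv2 ((d : ℤ) - i) (by omega) v hv'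
    rwa [show (d : ℤ) - 2 * ((d : ℤ) - i) = 2 * i - (d : ℤ) by ring,
      show (d : ℤ) - ((d : ℤ) - i) - 1 = i - 1 by ring] at h
  -- [0*D*] (a)
  · rintro _ ⟨v, hv, rfl⟩
    rw [end_sub_smul_apply]
    have hvV : v ∈ Vs' i := hv
    have hv' : v ∈ sumIcc Vs' ((d : ℤ) - ((d : ℤ) - i)) (d : ℤ) := by
      rw [show (d : ℤ) - ((d : ℤ) - i) = i by ring]
      exact le_sumIcc Vs' le_rfl hi2 hvV
    have h := qGs_Ks hTD hKs ((d : ℤ) - i) (by omega) v hv'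
    rwa [show 2 * ((d : ℤ) - i) - (d : ℤ) = (d : ℤ) - 2 * i by ring,
      show (d : ℤ) - ((d : ℤ) - i) + 1 = i + 1 by ring] at h
  -- [0*D*] (b)
  · rintro _ ⟨v, hv, rfl⟩
    rw [end_sub_smul_apply]
    have hvV : v ∈ Vs' i := hv
    have h1 : Ksinv v - q ^ (2 * i - (d : ℤ)) • v ∈ sumIcc Vs' (i + 1) (d : ℤ) := by
      have hv' : v ∈ sumIcc Vs' ((d : ℤ) - ((d : ℤ) - i)) (d : ℤ) := by
        rw [show (d : ℤ) - ((d : ℤ) - i) = i by ring]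
        exact le_sumIcc Vs' le_rfl hi2 hvV
      have h := qGs_Ksinv hTD hq0 hKs hKsinv2 ((d : ℤ) - i) (by omega) v hv'
      rwa [show (d : ℤ) - 2 * ((d : ℤ) - i) = 2 * i - (d : ℤ) by ring,
        show (d : ℤ) - ((d : ℤ) - i) + 1 = i + 1 by ring] at h
    have h2 : Ksinv v - q ^ (2 * i - (d : ℤ)) • v ∈ sumIcc Vs' i (i + 1) := by
      have hK := comp_Ksinv hTD hq0 hq ha' hθ' hKs hKsinv2 i hi1 hi2 v hvV
      have hle : Vs' i ⊔ Vs' (i + 1) ≤ sumIcc Vs' i (i + 1) :=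
        sup_le (le_sumIcc Vs' le_rfl (by omega)) (le_sumIcc Vs' (by omega) le_rfl)
      exact sub_mem (hle hK) (le_sumIcc Vs' le_rfl (by omega)
        (Submodule.smul_mem _ _ hvV))
    have h3 := sumIcc_inf_sumIcc_le hTD.decompV'.indep
      (m := i) (n := i + 1) (m' := i + 1) (n' := (d : ℤ)) ⟨h2, h1⟩
    have hle : sumIcc Vs' (max i (i + 1)) (min (i + 1) (d : ℤ)) ≤ Vs' (i + 1) := by
      rcases lt_or_ge i (d : ℤ) with h | h
      · rw [show max i (i + 1) = i + 1 by omega, show min (i + 1) (d : ℤ) = i + 1 by omega,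
          sumIcc_self]
      · rw [sumIcc_bot (by omega)]
        exact bot_le
    exact hle h3
  -- [0*D] (a)
  · rintro _ ⟨v, hv, rfl⟩
    have hv' : v ∈ sumIcc Vs' 0 i ⊓ sumIcc Vs i (d : ℤ) := hv
    obtain ⟨hv1, hv2⟩ := hv'
    have h := Ks_G hTD hq0 hq ha hθ hKs i v hv2
    exact FlagP_G hTD (i - 1) h
  -- [0*D] (b)
  · rintro _ ⟨v, hv, rfl⟩
    have hv' : v ∈ sumIcc Vs' 0 i ⊓ sumIcc Vs i (d : ℤ) := hv
    obtain ⟨hv1, hv2⟩ := hv'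
    have h := Ksinv_Fs hTD hq0 hq ha' hθ' hKs hKsinv2 i v hv1
    exact FlagP_Fs hTD (i + 1) h
  -- [0*0] (a)
  · rintro _ ⟨v, hv, rfl⟩
    rw [end_sub_smul_apply]
    have hv' : v ∈ sumIcc Vs' 0 i ⊓ sumIcc Vs 0 ((d : ℤ) - i) := hv
    obtain ⟨hv1, hv2⟩ := hv'
    have h := qF_Ks hTD hKs i hi1 v hv2
    have hle := FlagQ_F hTD (i + 1)
    rw [show (d : ℤ) - (i + 1) = (d : ℤ) - i - 1 by ring] at hle
    exact hle h
  -- [0*0] (b)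
  · rintro _ ⟨v, hv, rfl⟩
    rw [end_sub_smul_apply]
    have hv' : v ∈ sumIcc Vs' 0 i ⊓ sumIcc Vs 0 ((d : ℤ) - i) := hv
    obtain ⟨hv1, hv2⟩ := hv'
    rw [dec0s0, Submodule.mem_inf]
    constructor
    · have h1 : Ksinv v ∈ sumIcc Vs' 0 (i + 1) :=
        Ksinv_Fs hTD hq0 hq ha' hθ' hKs hKsinv2 i v hv1
      have h2 : q ^ ((d : ℤ) - 2 * i) • v ∈ sumIcc Vs' 0 (i + 1) :=
        Submodule.smul_mem _ _ (sumIcc_mono Vs' le_rfl (by omega) hv1)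
      exact sub_mem h1 h2
    · have h := qF_Ksinv hTD hq0 hKs hKsinv2 i hi1 v hv2
      rwa [show (d : ℤ) - i - 1 = (d : ℤ) - (i + 1) by ring] at h
  -- [D*0] (a)
  · refine le_bot_iff.mp ?_
    rintro _ ⟨v, hv, rfl⟩
    rw [end_sub_smul_apply, hKs i hi1 hi2 v hv, sub_self]
    exact Submodule.zero_mem _
  -- [D*0] (b)
  · refine le_bot_iff.mp ?_
    rintro _ ⟨v, hv, rfl⟩
    rw [end_sub_smul_apply, Ksinv_eig hq0 hKs hKsinv2 i hi1 hi2 v hv, sub_self]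
    exact Submodule.zero_mem _
  -- [D*D] (a)
  · rintro _ ⟨v, hv, rfl⟩
    rw [end_sub_smul_apply]
    have hv' : v ∈ sumIcc Vs' ((d : ℤ) - i) (d : ℤ) ⊓ sumIcc Vs i (d : ℤ) := hv
    obtain ⟨hv1, hv2⟩ := hv'
    rw [decDsD, Submodule.mem_inf]
    constructor
    · have h := qGs_Ks hTD hKs i hi2 v hv1
      rwa [show (d : ℤ) - i + 1 = (d : ℤ) - (i - 1) by ring] at h
    · have h1 : Ks v ∈ sumIcc Vs (i - 1) (d : ℤ) :=
        Ks_G hTD hq0 hq ha hθ hKs i v hv2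
      have h2 : q ^ (2 * i - (d : ℤ)) • v ∈ sumIcc Vs (i - 1) (d : ℤ) :=
        Submodule.smul_mem _ _ (sumIcc_mono Vs (by omega) le_rfl hv2)
      exact sub_mem h1 h2
  -- [D*D] (b)
  · rintro _ ⟨v, hv, rfl⟩
    rw [end_sub_smul_apply]
    have hv' : v ∈ sumIcc Vs' ((d : ℤ) - i) (d : ℤ) ⊓ sumIcc Vs i (d : ℤ) := hv
    obtain ⟨hv1, hv2⟩ := hv'
    have h := qGs_Ksinv hTD hq0 hKs hKsinv2 i hi2 v hv1
    have hle := FlagX_Gs hTD (i - 1)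
    rw [show (d : ℤ) - (i - 1) = (d : ℤ) - i + 1 by ring] at hle
    exact hle h
end
end

section
/- There exist nonzero scalars ε_0, ε_1 ∈ 𝕂, a nonnegative integer d, and a decomposition U_0, …, U_d of V (a sequence of nonzero subspaces with V = U_0 ⊕ ⋯ ⊕ U_d; set U_{−1} = 0, U_{d+1} = 0) such that (k_0 − ε_0 q^{2i−d}I)U_i = 0 and (k_1 − ε_1 q^{d−2i}I)U_i = 0 for 0 ≤ i ≤ d. The data ε_0, ε_1; U_0, …, U_d is uniquely determined. Moreover, for 0 ≤ i ≤ d: (ε_0 y_0^+ − q^{d−2i}I)U_i ⊆ U_{i+1}, (ε_1 y_1^− − q^{2i−d}I)U_i ⊆ U_{i+1}, (ε_0 y_0^− − q^{d−2i}I)U_i ⊆ U_{i−1}, and (ε_1 y_1^+ − q^{2i−d}I)U_i ⊆ U_{i−1}. -/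
noncomputable section

open Submodule

variable {K : Type*} [Field K]

variable {V : Type*} [AddCommGroup V] [Module K V]

/-!
Since `k₀k₁` commutes with every generator, Schur's lemma makes it a scalar `γ`. The relations
then say that `y₀⁺ - k₀⁻¹` and `y₁⁻ - k₁⁻¹` multiply eigenvalues of `k₀` by `q²`, while
`y₀⁻ - k₀⁻¹` and `y₁⁺ - k₁⁻¹` multiply them by `q⁻²`, and the `k`'s preserve the eigenspaces
of `k₀`. So for an eigenvalue `θ` of `k₀`, the eigenspaces `W j` of `k₀` for `θ q^{2j}` form a ladder:
every generator maps `W j` into `W (j-1) + W j + W (j+1)`. By irreducibility the nonzero rungs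
have no gaps (the rungs below a gap would span an invariant subspace) and span `V`, which gives
the decomposition `U i = W (m + i)`. For uniqueness, the `U'_i` of any other such decomposition lie
in eigenspaces of `k₀`, so they are the `U_i` up to a shift of the index, and comparing the ranges of
nonzero terms shows that the shift is `0`.
-/

theorem injective_mul_zpow_two_mul {q θ : K} (hq0 : q ≠ 0) (hq : ∀ n : ℕ, 0 < n → q ^ n ≠ 1)
    (hθ : θ ≠ 0) : Function.Injective fun j : ℤ => θ * q ^ (2 * j) := by
  intro a b hab
  have h1 : q ^ (2 * a - 2 * b) = 1 := by
    rw [zpow_sub₀ hq0, mul_left_cancel₀ hθ hab, div_self (zpow_ne_zero _ hq0)]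
  have h2 : q ^ (2 * a - 2 * b).natAbs = 1 := by
    rcases Int.natAbs_eq (2 * a - 2 * b) with h | h
    · rwa [h, zpow_natCast] at h1
    · rwa [h, zpow_neg, inv_eq_one, zpow_natCast] at h1
  by_contra hab'
  exact hq _ (by omega) h2

theorem zpow_mul_mul_zpow {q : K} (hq0 : q ≠ 0) (ε : K) {a b c : ℤ} (h : a + b = c) :
    q ^ a * (ε * q ^ b) = ε * q ^ c := by
  rw [mul_left_comm, ← zpow_add₀ hq0, h]

section Algebra

variable {A : Type*} [Ring A] [Algebra K A]

theorem eq_smul_one_of_inv_smul_eq_one {c : K} {X : A} (hX : c⁻¹ • X = 1) : X = c • 1 := by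
  by_cases hc : c = 0
  · have : Subsingleton A := subsingleton_of_zero_eq_one (by simpa [hc] using hX)
    exact Subsingleton.elim _ _
  · rw [← hX, smul_smul, mul_inv_cancel₀ hc, one_smul]

theorem mul_eq_inv_smul_mul_of_mul_eq_smul {k k' X : A} {γ μ : K} (hγ : γ ≠ 0) (hμ : μ ≠ 0)
    (hkk' : k * k' = γ • 1) (hk'k : k' * k = γ • 1) (h : k' * X = μ • (X * k')) :
    k * X = μ⁻¹ • (X * k) := by
  have : γ • (X * k) = (μ * γ) • (k * X) := calc
    γ • (X * k) = k * k' * X * k := by rw [hkk', smul_mul_assoc, smul_mul_assoc, one_mul]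
    _ = μ • (k * X * (k' * k)) := by
      rw [mul_assoc k, h, mul_smul_comm, smul_mul_assoc]
      noncomm_ring
    _ = (μ * γ) • (k * X) := by rw [hk'k, mul_smul_comm, mul_one, smul_smul]
  rw [mul_comm, ← smul_smul] at this
  rw [smul_right_injective A hγ this, smul_smul, inv_mul_cancel₀ hμ, one_smul]

end Algebra

namespace Module.End

variable {f g X y : Module.End K V}

theorem map_eigenspace_le_of_mul_eq_smul {μ : K} (h : f * X = μ • (X * f)) (c : K) :
    (f.eigenspace c).map X ≤ f.eigenspace (μ * c) := by
  rintro _ ⟨v, hv, rfl⟩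
  rw [SetLike.mem_coe, mem_eigenspace_iff] at hv
  rw [mem_eigenspace_iff, ← mul_apply, h, LinearMap.smul_apply, mul_apply, hv, map_smul,
    smul_smul]

theorem eigenspace_le_eigenspace_of_mul_eq_smul_one {γ c : K} (h : g * f = γ • 1) (hc : c ≠ 0) :
    f.eigenspace c ≤ g.eigenspace (γ / c) := by
  intro v hv
  rw [mem_eigenspace_iff] at hv ⊢
  have hgf : c • g v = γ • v := by simpa [hv] using congr($h v)
  rw [div_eq_inv_mul, mul_smul, ← hgf, smul_smul, inv_mul_cancel₀ hc, one_smul]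

theorem map_sub_smul_one_eq_bot_iff {p : Submodule K V} {c : K} :
    p.map (f - c • 1) = ⊥ ↔ p ≤ f.eigenspace c := by
  rw [eigenspace_def, LinearMap.le_ker_iff_map]

theorem map_smul_sub_smul_one_eigenspace_le {c c' μ a b c'' : K}
    (hg : f.eigenspace c ≤ g.eigenspace c') (hX : f * (y - g) = μ • ((y - g) * f))
    (hab : a * c' = b) (hμ : μ * c = c'') :
    (f.eigenspace c).map (a • y - b • 1) ≤ f.eigenspace c'' := by
  rintro _ ⟨v, hv, rfl⟩
  have hgv : g v = c' • v := mem_eigenspace_iff.1 (hg hv)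
  have hv' : (a • y - b • 1) v = a • (y - g) v := by
    simp [hgv, ← hab, smul_sub, smul_smul]
  rw [hv', ← hμ]
  exact Submodule.smul_mem _ _ (map_eigenspace_le_of_mul_eq_smul hX c ⟨v, hv, rfl⟩)

theorem HasEigenvalue.ne_zero_of_mul_eq_one {θ : K} (hθ : f.HasEigenvalue θ) (h : g * f = 1) :
    θ ≠ 0 := by
  rintro rfl
  obtain ⟨v, hv⟩ := hθ.exists_hasEigenvector
  exact hv.2 (by simpa [hv.apply_eq_smul] using congr($h v).symm)

theorem eq_of_le_eigenspace_of_le_eigenspace {a b : K} {p : Submodule K V} (hp : p ≠ ⊥)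
    (ha : p ≤ f.eigenspace a) (hb : p ≤ f.eigenspace b) : a = b := by
  obtain ⟨v, hv, hv0⟩ := Submodule.exists_mem_ne_zero_of_ne_bot hp
  exact smul_left_injective K hv0
    ((mem_eigenspace_iff.1 (ha hv)).symm.trans (mem_eigenspace_iff.1 (hb hv)))

end Module.End

def IsIrreducibleFor (S : Set (Module.End K V)) : Prop :=
  ∀ W : Submodule K V, (∀ g ∈ S, W.map g ≤ W) → W = ⊥ ∨ W = ⊤

theorem IsIrreducibleFor.exists_eq_smul_one [IsAlgClosed K] [FiniteDimensional K V]
    [Nontrivial V] {S : Set (Module.End K V)} (hS : IsIrreducibleFor S) {c : Module.End K V}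
    (hc : ∀ g ∈ S, Commute c g) : ∃ γ : K, c = γ • 1 := by
  obtain ⟨γ, hγ⟩ := c.exists_eigenvalue
  have htop : c.eigenspace γ = ⊤ := by
    refine (hS _ fun g hg => ?_).resolve_left (Module.End.hasEigenvalue_iff.1 hγ)
    exact Submodule.map_le_iff_le_comap.2 fun v hv =>
      c.mapsTo_genEigenspace_of_comm (hc g hg) γ 1 hv
  refine ⟨γ, LinearMap.ext fun v => ?_⟩
  simpa using Module.End.mem_eigenspace_iff.1 (htop ▸ Submodule.mem_top : v ∈ c.eigenspace γ)

section Ladder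

def IsLadderOp (W : ℤ → Submodule K V) (g : Module.End K V) : Prop :=
  ∀ j, (W j).map g ≤ W (j - 1) ⊔ W j ⊔ W (j + 1)

variable {W : ℤ → Submodule K V} {g g' : Module.End K V}

theorem IsLadderOp.add (hg : IsLadderOp W g) (hg' : IsLadderOp W g') :
    IsLadderOp W (g + g') :=
  fun j => (Submodule.map_add_le _ _ _).trans (sup_le (hg j) (hg' j))

theorem isLadderOp_of_map_le {n : ℤ} (hn : |n| ≤ 1) (h : ∀ j, (W j).map g ≤ W (j + n)) :
    IsLadderOp W g := by
  intro j
  refine (h j).trans ?_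
  obtain rfl | rfl | rfl : n = -1 ∨ n = 0 ∨ n = 1 := by rw [abs_le] at hn; omega
  · rw [← sub_eq_add_neg]
    exact le_sup_of_le_left le_sup_left
  · rw [add_zero]
    exact le_sup_of_le_left le_sup_right
  · exact le_sup_right

theorem IsLadderOp.map_biSup_le (hg : IsLadderOp W g) {s : Set ℤ}
    (hs : ∀ j ∈ s, ∀ i, |i - j| ≤ 1 → W i ≠ ⊥ → i ∈ s) :
    (⨆ j ∈ s, W j).map g ≤ ⨆ j ∈ s, W j := by
  have hle : ∀ j ∈ s, ∀ i, |i - j| ≤ 1 → W i ≤ ⨆ j ∈ s, W j := fun j hj i hi => by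
    by_cases hWi : W i = ⊥
    · simp [hWi]
    · exact le_biSup W (hs j hj i hi hWi)
  simp_rw [Submodule.map_iSup]
  refine iSup₂_le fun j hj => (hg j).trans (sup_le (sup_le ?_ ?_) ?_) <;>
    exact hle j hj _ (abs_le.2 ⟨by omega, by omega⟩)

theorem IsIrreducibleFor.biSup_eq_top {S : Set (Module.End K V)} (hS : IsIrreducibleFor S)
    (hW : ∀ g ∈ S, IsLadderOp W g) {s : Set ℤ}
    (hs : ∀ j ∈ s, ∀ i, |i - j| ≤ 1 → W i ≠ ⊥ → i ∈ s) (hne : ∃ j ∈ s, W j ≠ ⊥) :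
    ⨆ j ∈ s, W j = ⊤ := by
  refine (hS _ fun g hg => (hW g hg).map_biSup_le hs).resolve_left fun hbot => ?_
  obtain ⟨j, hj, hWj⟩ := hne
  exact hWj (eq_bot_iff.2 (hbot ▸ le_biSup W hj))

theorem IsIrreducibleFor.exists_isDecomposition_comp_add [FiniteDimensional K V]
    {S : Set (Module.End K V)} (hS : IsIrreducibleFor S) (hW : ∀ g ∈ S, IsLadderOp W g)
    (hind : iSupIndep W) (hne : ∃ j, W j ≠ ⊥) :
    ∃ (m : ℤ) (d : ℕ), IsDecomposition d fun i => W (m + i) := by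
  set T := {j | W j ≠ ⊥}
  have hT : T.Finite := Submodule.finite_ne_bot_of_iSupIndep hind
  have hmT : sInf T ∈ T := Int.csInf_mem hne hT.bddBelow
  have hMT : sSup T ∈ T := Int.csSup_mem hne hT.bddAbove
  have hm : ∀ j ∈ T, sInf T ≤ j := fun j hj => csInf_le hT.bddBelow hj
  have hM : ∀ j ∈ T, j ≤ sSup T := fun j hj => le_csSup hT.bddAbove hj
  have hmM := hm _ hMT
  refine ⟨sInf T, (sSup T - sInf T).toNat, ⟨fun i hi => ?_, fun i hi => ?_,
    fun i hi0 hid hbot => ?_, hind.comp (add_right_injective _), ?_⟩⟩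
  · by_contra hi'
    linarith [hm _ hi']
  · by_contra hi'
    have := hM _ hi'
    omega
  · set g := sInf T + i
    have hgm : g ≠ sInf T := fun h => hmT (h ▸ hbot)
    have hgM : g ≠ sSup T := fun h => hMT (h ▸ hbot)
    have htop := hS.biSup_eq_top hW (s := Set.Iio g) (fun j hj k hk hWk => by
      have hkg : k ≠ g := fun h => hWk (h ▸ hbot)
      have := abs_le.1 hk
      simp only [Set.mem_Iio] at hj ⊢
      omega) ⟨sInf T, by simp only [Set.mem_Iio]; omega, hmT⟩
    have := hind.mem_of_biSup_eq_top htop hMT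
    simp only [Set.mem_Iio] at this
    omega
  · rw [show ⨆ i, W (sInf T + i) = ⨆ j, W j from (Equiv.addLeft (sInf T)).iSup_comp,
      ← iSup_univ]
    exact hS.biSup_eq_top hW (fun _ _ _ _ _ => Set.mem_univ _) ⟨_, Set.mem_univ _, hmT⟩

end Ladder

theorem Module.End.isLadderOp_eigenspace {f X : Module.End K V} {q : K} (hq0 : q ≠ 0) (θ : K)
    {n : ℤ} (hn : |n| ≤ 1) (h : f * X = q ^ (2 * n) • (X * f)) :
    IsLadderOp (fun j => f.eigenspace (θ * q ^ (2 * j))) X :=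
  isLadderOp_of_map_le hn fun j => (map_eigenspace_le_of_mul_eq_smul h _).trans_eq <| by
    rw [zpow_mul_mul_zpow hq0 θ (by ring : 2 * n + 2 * j = 2 * (j + n))]

theorem Module.End.isLadderOp_eigenspace_of_commute {f X : Module.End K V} {q : K}
    (hq0 : q ≠ 0) (θ : K) (h : Commute f X) :
    IsLadderOp (fun j => f.eigenspace (θ * q ^ (2 * j))) X :=
  isLadderOp_eigenspace hq0 θ (n := 0) (by simp) (by simpa using h.eq)

theorem IsDecomposition.ne_bot_iff {d : ℕ} {U : ℤ → Submodule K V} (hU : IsDecomposition d U)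
    {i : ℤ} : U i ≠ ⊥ ↔ 0 ≤ i ∧ i ≤ d := by
  refine ⟨fun h => ⟨?_, ?_⟩, fun h => hU.ne_bot i h.1 h.2⟩ <;> by_contra hi
  exacts [h (hU.bot_of_lt i (by omega)), h (hU.bot_of_gt i (by omega))]

theorem Module.End.eq_of_isDecomposition_eigenspace {f : Module.End K V} {q ε ε' : K}
    (hq0 : q ≠ 0) {d d' : ℕ} {U' : ℤ → Submodule K V}
    (hU : IsDecomposition d fun i : ℤ => f.eigenspace (ε * q ^ (2 * i - d)))
    (hU' : IsDecomposition d' U') (hle : ∀ i, U' i ≤ f.eigenspace (ε' * q ^ (2 * i - d'))) :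
    ε' = ε ∧ d' = d ∧ U' = fun i : ℤ => f.eigenspace (ε * q ^ (2 * i - d)) := by
  have hE : f.eigenspace (ε' * q ^ (2 * 0 - (d' : ℤ))) ≠ ⊥ := fun hb =>
    hU'.ne_bot 0 le_rfl (Int.natCast_nonneg _) (eq_bot_iff.2 (hb ▸ hle 0))
  obtain ⟨t, ht⟩ : ∃ t : ℤ, ε * q ^ (2 * t - d) = ε' * q ^ (2 * 0 - (d' : ℤ)) :=
    f.eigenspaces_iSupIndep.mem_of_biSup_eq_top (by rw [iSup_range]; exact hU.sup_eq_top) hE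
  have hshift : ∀ i : ℤ, ε' * q ^ (2 * i - (d' : ℤ)) = ε * q ^ (2 * (i + t) - d) := fun i => by
    rw [show 2 * i - (d' : ℤ) = (2 * 0 - (d' : ℤ)) + 2 * i by ring, zpow_add₀ hq0,
      ← mul_assoc, ← ht, mul_comm]
    exact zpow_mul_mul_zpow hq0 ε (by ring)
  have heq : (fun i : ℤ => U' (i - t)) = fun i : ℤ => f.eigenspace (ε * q ^ (2 * i - d)) := by
    refine (hU.indep.le_iff_eq_of_iSup_eq_top ?_).1 fun i : ℤ => (hle _).trans_eq ?_
    · rw [show ⨆ i, U' (i - t) = ⨆ i, U' i from (Equiv.subRight t).iSup_comp]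
      exact hU'.sup_eq_top
    · rw [hshift, sub_add_cancel]
  have hrange : ∀ i : ℤ, (0 ≤ i - t ∧ i - t ≤ d') ↔ (0 ≤ i ∧ i ≤ d) := fun i => by
    rw [← hU'.ne_bot_iff, ← hU.ne_bot_iff, show U' (i - t) = _ from congrFun heq i]
  obtain ⟨rfl, rfl⟩ : t = 0 ∧ d' = d := by
    have := hrange t; have := hrange 0; have := hrange d; have := hrange d'
    omega
  refine ⟨(mul_left_injective₀ (zpow_ne_zero _ hq0) ht).symm, rfl, ?_⟩
  simpa using heq

def alternateGenerators {A : Type*} (yp ym k kinv : Fin 2 → A) : Set A :=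
  Set.range yp ∪ Set.range ym ∪ Set.range k ∪ Set.range kinv

namespace AlternateRelations

section Algebra

variable {q : K} {A : Type*} [Ring A] [Algebra K A] {yp ym k kinv : Fin 2 → A}

theorem k_mul_yp_sub (h : AlternateRelations q yp ym k kinv) (hq0 : q ≠ 0) (i : Fin 2) :
    k i * (yp i - kinv i) = q ^ (2 : ℤ) • ((yp i - kinv i) * k i) := by
  have hrel := eq_smul_one_of_inv_smul_eq_one (h.rel_yp_k i)
  rw [mul_sub, sub_mul, h.k_kinv, h.kinv_k]
  linear_combination (norm := match_scalars <;> field_simp <;> ring) (-q) • hrel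

theorem k_mul_ym_sub (h : AlternateRelations q yp ym k kinv) (hq0 : q ≠ 0) (i : Fin 2) :
    k i * (ym i - kinv i) = q ^ (-2 : ℤ) • ((ym i - kinv i) * k i) := by
  have hrel := eq_smul_one_of_inv_smul_eq_one (h.rel_k_ym i)
  rw [mul_sub, sub_mul, h.k_kinv, h.kinv_k]
  linear_combination (norm := match_scalars <;> field_simp <;> ring) q⁻¹ • hrel

theorem commute_k (h : AlternateRelations q yp ym k kinv) : Commute (k 0) (k 1) := by
  have := congrArg (kinv 0 * ·) (h.central_k 0)
  simp only [← mul_assoc, h.kinv_k, one_mul] at this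
  exact this.symm

theorem commute_k_zero_kinv (h : AlternateRelations q yp ym k kinv) (i : Fin 2) :
    Commute (k 0) (kinv i) := by
  fin_cases i
  · exact (h.k_kinv 0).trans (h.kinv_k 0).symm
  · exact Commute.units_inv_right (u := ⟨k 1, kinv 1, h.k_kinv 1, h.kinv_k 1⟩) h.commute_k

theorem commute_k_mul_k_of_mem (h : AlternateRelations q yp ym k kinv) :
    ∀ g ∈ alternateGenerators yp ym k kinv, Commute (k 0 * k 1) g := by
  rintro _ (((⟨i, rfl⟩ | ⟨i, rfl⟩) | ⟨i, rfl⟩) | ⟨i, rfl⟩)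
  exacts [h.central_yp i, h.central_ym i, h.central_k i, h.central_kinv i]

theorem ne_zero_of_k_mul_k_eq_smul_one [Nontrivial A] (h : AlternateRelations q yp ym k kinv)
    {γ : K} (hγ : k 0 * k 1 = γ • 1) : γ ≠ 0 := by
  rintro rfl
  have : (1 : A) = kinv 1 * (kinv 0 * (k 0 * k 1)) := by
    rw [← mul_assoc (kinv 0), h.kinv_k, one_mul, h.kinv_k]
  rw [hγ, zero_smul, mul_zero, mul_zero] at this
  exact one_ne_zero this

theorem k_zero_mul_yp_one_sub (h : AlternateRelations q yp ym k kinv) (hq0 : q ≠ 0) {γ : K}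
    (hγ0 : γ ≠ 0) (hγ : k 0 * k 1 = γ • 1) :
    k 0 * (yp 1 - kinv 1) = q ^ (-2 : ℤ) • ((yp 1 - kinv 1) * k 0) := by
  rw [zpow_neg]
  exact mul_eq_inv_smul_mul_of_mul_eq_smul hγ0 (zpow_ne_zero _ hq0) hγ
    (h.commute_k.eq ▸ hγ) (h.k_mul_yp_sub hq0 1)

theorem k_zero_mul_ym_one_sub (h : AlternateRelations q yp ym k kinv) (hq0 : q ≠ 0) {γ : K}
    (hγ0 : γ ≠ 0) (hγ : k 0 * k 1 = γ • 1) :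
    k 0 * (ym 1 - kinv 1) = q ^ (2 : ℤ) • ((ym 1 - kinv 1) * k 0) := by
  rw [← inv_inv (q ^ (2 : ℤ)), ← zpow_neg]
  exact mul_eq_inv_smul_mul_of_mul_eq_smul hγ0 (zpow_ne_zero _ hq0) hγ
    (h.commute_k.eq ▸ hγ) (h.k_mul_ym_sub hq0 1)

end Algebra

variable {q : K} {yp ym k kinv : Fin 2 → Module.End K V}

theorem isLadderOp_eigenspace_k_zero (h : AlternateRelations q yp ym k kinv) (hq0 : q ≠ 0) {γ : K}
    (hγ0 : γ ≠ 0) (hγ : k 0 * k 1 = γ • 1) (θ : K) :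
    ∀ g ∈ alternateGenerators yp ym k kinv,
      IsLadderOp (fun j => (k 0).eigenspace (θ * q ^ (2 * j))) g := by
  set W : ℤ → Submodule K V := fun j => (k 0).eigenspace (θ * q ^ (2 * j))
  have ladder {X : Module.End K V} (n : ℤ) (hn : |n| ≤ 1)
      (hX : k 0 * X = q ^ (2 * n) • (X * k 0)) : IsLadderOp W X :=
    Module.End.isLadderOp_eigenspace hq0 θ hn hX
  have hk : ∀ i, IsLadderOp W (k i) := Fin.forall_fin_two.2
    ⟨Module.End.isLadderOp_eigenspace_of_commute hq0 θ (Commute.refl _),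
      Module.End.isLadderOp_eigenspace_of_commute hq0 θ h.commute_k⟩
  have hkinv : ∀ i, IsLadderOp W (kinv i) := fun i =>
    Module.End.isLadderOp_eigenspace_of_commute hq0 θ (h.commute_k_zero_kinv i)
  have hyp : ∀ i, IsLadderOp W (yp i) := by
    refine Fin.forall_fin_two.2 ⟨?_, ?_⟩ <;> rw [← sub_add_cancel (yp _) (kinv _)]
    · exact (ladder 1 le_rfl (h.k_mul_yp_sub hq0 0)).add (hkinv 0)
    · exact (ladder (-1) le_rfl (h.k_zero_mul_yp_one_sub hq0 hγ0 hγ)).add (hkinv 1)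
  have hym : ∀ i, IsLadderOp W (ym i) := by
    refine Fin.forall_fin_two.2 ⟨?_, ?_⟩ <;> rw [← sub_add_cancel (ym _) (kinv _)]
    · exact (ladder (-1) le_rfl (h.k_mul_ym_sub hq0 0)).add (hkinv 0)
    · exact (ladder 1 le_rfl (h.k_zero_mul_ym_one_sub hq0 hγ0 hγ)).add (hkinv 1)
  rintro _ (((⟨i, rfl⟩ | ⟨i, rfl⟩) | ⟨i, rfl⟩) | ⟨i, rfl⟩)
  exacts [hyp i, hym i, hk i, hkinv i]

theorem eigenspace_le_eigenspace_kinv_zero (h : AlternateRelations q yp ym k kinv) {c : K}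
    (hc : c ≠ 0) : (k 0).eigenspace c ≤ (kinv 0).eigenspace (1 / c) :=
  Module.End.eigenspace_le_eigenspace_of_mul_eq_smul_one
    ((h.kinv_k 0).trans (one_smul K (1 : Module.End K V)).symm) hc

theorem eigenspace_le_eigenspace_k_one (h : AlternateRelations q yp ym k kinv) {γ c : K}
    (hγ : k 0 * k 1 = γ • 1) (hc : c ≠ 0) : (k 0).eigenspace c ≤ (k 1).eigenspace (γ / c) :=
  Module.End.eigenspace_le_eigenspace_of_mul_eq_smul_one (h.commute_k.eq ▸ hγ) hc

theorem eigenspace_le_eigenspace_kinv_one (h : AlternateRelations q yp ym k kinv) {γ c : K}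
    (hγ0 : γ ≠ 0) (hγ : k 0 * k 1 = γ • 1) (hc : c ≠ 0) :
    (k 0).eigenspace c ≤ (kinv 1).eigenspace (c / γ) := by
  refine (h.eigenspace_le_eigenspace_k_one hγ hc).trans ?_
  rw [← one_div_div γ c]
  exact Module.End.eigenspace_le_eigenspace_of_mul_eq_smul_one
    ((h.kinv_k 1).trans (one_smul K _).symm) (div_ne_zero hγ0 hc)

variable {ε γ : K} (d : ℕ) (i : ℤ)

theorem eigenspace_weight_le_eigenspace_k_one (h : AlternateRelations q yp ym k kinv) (hq0 : q ≠ 0)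
    (hε : ε ≠ 0) (hγ : k 0 * k 1 = γ • 1) :
    (k 0).eigenspace (ε * q ^ (2 * i - d)) ≤ (k 1).eigenspace (γ / ε * q ^ ((d : ℤ) - 2 * i)) := by
  refine (h.eigenspace_le_eigenspace_k_one hγ (mul_ne_zero hε (zpow_ne_zero _ hq0))).trans_eq ?_
  rw [← neg_sub, zpow_neg]
  field_simp

theorem map_yp_zero_le (h : AlternateRelations q yp ym k kinv) (hq0 : q ≠ 0) (hε : ε ≠ 0) :
    ((k 0).eigenspace (ε * q ^ (2 * i - d))).map (ε • yp 0 - q ^ ((d : ℤ) - 2 * i) • 1) ≤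
      (k 0).eigenspace (ε * q ^ (2 * (i + 1) - d)) :=
  Module.End.map_smul_sub_smul_one_eigenspace_le
    (h.eigenspace_le_eigenspace_kinv_zero (mul_ne_zero hε (zpow_ne_zero _ hq0)))
    (h.k_mul_yp_sub hq0 0) (by rw [← neg_sub, zpow_neg]; field_simp)
    (zpow_mul_mul_zpow hq0 ε (by ring))

theorem map_ym_zero_le (h : AlternateRelations q yp ym k kinv) (hq0 : q ≠ 0) (hε : ε ≠ 0) :
    ((k 0).eigenspace (ε * q ^ (2 * i - d))).map (ε • ym 0 - q ^ ((d : ℤ) - 2 * i) • 1) ≤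
      (k 0).eigenspace (ε * q ^ (2 * (i - 1) - d)) :=
  Module.End.map_smul_sub_smul_one_eigenspace_le
    (h.eigenspace_le_eigenspace_kinv_zero (mul_ne_zero hε (zpow_ne_zero _ hq0)))
    (h.k_mul_ym_sub hq0 0) (by rw [← neg_sub, zpow_neg]; field_simp)
    (zpow_mul_mul_zpow hq0 ε (by ring))

theorem map_ym_one_le (h : AlternateRelations q yp ym k kinv) (hq0 : q ≠ 0) (hε : ε ≠ 0)
    (hγ0 : γ ≠ 0) (hγ : k 0 * k 1 = γ • 1) :
    ((k 0).eigenspace (ε * q ^ (2 * i - d))).map ((γ / ε) • ym 1 - q ^ (2 * i - (d : ℤ)) • 1) ≤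
      (k 0).eigenspace (ε * q ^ (2 * (i + 1) - d)) :=
  Module.End.map_smul_sub_smul_one_eigenspace_le
    (h.eigenspace_le_eigenspace_kinv_one hγ0 hγ (mul_ne_zero hε (zpow_ne_zero _ hq0)))
    (h.k_zero_mul_ym_one_sub hq0 hγ0 hγ) (by field_simp)
    (zpow_mul_mul_zpow hq0 ε (by ring))

theorem map_yp_one_le (h : AlternateRelations q yp ym k kinv) (hq0 : q ≠ 0) (hε : ε ≠ 0)
    (hγ0 : γ ≠ 0) (hγ : k 0 * k 1 = γ • 1) :
    ((k 0).eigenspace (ε * q ^ (2 * i - d))).map ((γ / ε) • yp 1 - q ^ (2 * i - (d : ℤ)) • 1) ≤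
      (k 0).eigenspace (ε * q ^ (2 * (i - 1) - d)) :=
  Module.End.map_smul_sub_smul_one_eigenspace_le
    (h.eigenspace_le_eigenspace_kinv_one hγ0 hγ (mul_ne_zero hε (zpow_ne_zero _ hq0)))
    (h.k_zero_mul_yp_one_sub hq0 hγ0 hγ) (by field_simp)
    (zpow_mul_mul_zpow hq0 ε (by ring))

end AlternateRelations

/-- existence and uniqueness of the weight space decomposition
of a finite dimensional irreducible `U_q(sl₂ hat)`-module. -/
theorem stmt15 {K : Type*} [Field K] [IsAlgClosed K]
    {V : Type*} [AddCommGroup V] [Module K V] [FiniteDimensional K V] [Nontrivial V]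
    (q : K) (hq0 : q ≠ 0) (hq : ∀ n : ℕ, 0 < n → q ^ n ≠ 1)
    (yp ym kk kkinv : Fin 2 → Module.End K V)
    (h : AlternateRelations q yp ym kk kkinv)
    (hirr : ∀ W : Submodule K V,
      (∀ i, Submodule.map (yp i) W ≤ W) → (∀ i, Submodule.map (ym i) W ≤ W) →
      (∀ i, Submodule.map (kk i) W ≤ W) → (∀ i, Submodule.map (kkinv i) W ≤ W) →
      W = ⊥ ∨ W = ⊤)
    :
    ∃ (e0 e1 : K) (d : ℕ) (U : ℤ → Submodule K V),
      e0 ≠ 0 ∧ e1 ≠ 0 ∧ IsDecomposition d U ∧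
      (∀ i : ℤ, Submodule.map (kk 0 - (e0 * q ^ (2 * i - (d : ℤ))) • 1) (U i) = ⊥) ∧
      (∀ i : ℤ, Submodule.map (kk 1 - (e1 * q ^ ((d : ℤ) - 2 * i)) • 1) (U i) = ⊥) ∧
      (∀ i : ℤ, Submodule.map (e0 • yp 0 - q ^ ((d : ℤ) - 2 * i) • 1) (U i) ≤ U (i + 1)) ∧
      (∀ i : ℤ, Submodule.map (e1 • ym 1 - q ^ (2 * i - (d : ℤ)) • 1) (U i) ≤ U (i + 1)) ∧
      (∀ i : ℤ, Submodule.map (e0 • ym 0 - q ^ ((d : ℤ) - 2 * i) • 1) (U i) ≤ U (i - 1)) ∧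
      (∀ i : ℤ, Submodule.map (e1 • yp 1 - q ^ (2 * i - (d : ℤ)) • 1) (U i) ≤ U (i - 1)) ∧
      (∀ (e0' e1' : K) (d' : ℕ) (U' : ℤ → Submodule K V),
        e0' ≠ 0 → e1' ≠ 0 → IsDecomposition d' U' →
        (∀ i : ℤ, Submodule.map (kk 0 - (e0' * q ^ (2 * i - (d' : ℤ))) • 1) (U' i) = ⊥) →
        (∀ i : ℤ, Submodule.map (kk 1 - (e1' * q ^ ((d' : ℤ) - 2 * i)) • 1) (U' i) = ⊥) →
        e0' = e0 ∧ e1' = e1 ∧ d' = d ∧ U' = U) := by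
  have hS : IsIrreducibleFor (alternateGenerators yp ym kk kkinv) := fun W hW => by
    apply hirr W <;> intro i <;> exact hW _ (by simp [alternateGenerators])
  obtain ⟨γ, hγ⟩ := hS.exists_eq_smul_one h.commute_k_mul_k_of_mem
  have hγ0 := h.ne_zero_of_k_mul_k_eq_smul_one hγ
  obtain ⟨θ, hθ⟩ := (kk 0).exists_eigenvalue
  have hθ0 := hθ.ne_zero_of_mul_eq_one (h.kinv_k 0)
  obtain ⟨m, d, hdec⟩ := hS.exists_isDecomposition_comp_add
    (h.isLadderOp_eigenspace_k_zero hq0 hγ0 hγ θ)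
    ((kk 0).eigenspaces_iSupIndep.comp (injective_mul_zpow_two_mul hq0 hq hθ0))
    ⟨0, by simpa using Module.End.hasEigenvalue_iff.1 hθ⟩
  set ε := θ * q ^ (2 * m + d)
  have hε : ε ≠ 0 := mul_ne_zero hθ0 (zpow_ne_zero _ hq0)
  have hU : IsDecomposition d fun i : ℤ => (kk 0).eigenspace (ε * q ^ (2 * i - d)) := by
    convert hdec using 3 with i
    rw [mul_assoc, ← zpow_add₀ hq0]
    ring_nf
  refine ⟨ε, γ / ε, d, _, hε, div_ne_zero hγ0 hε, hU,
    fun i => Module.End.map_sub_smul_one_eq_bot_iff.2 le_rfl,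
    fun i => Module.End.map_sub_smul_one_eq_bot_iff.2
      (h.eigenspace_weight_le_eigenspace_k_one d i hq0 hε hγ),
    fun i => h.map_yp_zero_le d i hq0 hε, fun i => h.map_ym_one_le d i hq0 hε hγ0 hγ,
    fun i => h.map_ym_zero_le d i hq0 hε, fun i => h.map_yp_one_le d i hq0 hε hγ0 hγ, ?_⟩
  intro e0' e1' d' U' _ _ hdec' hk0' hk1'
  obtain ⟨rfl, hd, rfl⟩ := Module.End.eq_of_isDecomposition_eigenspace hq0 hU hdec'
    fun i => Module.End.map_sub_smul_one_eq_bot_iff.1 (hk0' i)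
  subst d'
  refine ⟨rfl, mul_right_cancel₀ (zpow_ne_zero ((d : ℤ) - 2 * 0) hq0) ?_, rfl, rfl⟩
  exact Module.End.eq_of_le_eigenspace_of_le_eigenspace (hU.ne_bot 0 le_rfl d.cast_nonneg)
    (Module.End.map_sub_smul_one_eq_bot_iff.1 (hk1' 0))
    (h.eigenspace_weight_le_eigenspace_k_one d 0 hq0 hε hγ)
end
end
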